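/- arXiv:math/9906120 — 5 statements merged into one kernel-verified Lean document; each statement's English description precedes it below -/
import Mathlib

section
/- Let μ be a partition with ℓ(μ) ≤ N and μ_1 ≤ M, and μ' its conjugate. Then V_M(μ') = (∏_{j=1}^{N+M−1} j!) · V_N(μ) · W_N(μ) · ∏_{j=1}^N 1/(M + j − 1 − μ_j)!, where V_m(λ) = ∏_{1≤i<j≤m}(λ_i − λ_j + j − i) and W_m(λ) = ∏_{i=1}^m 1/(λ_i + m − i)!. -/
/-!
For `1 ≤ i ≤ N` and `1 ≤ j ≤ M` the numbers `μ_i + N - i` and `N + j - 1 - μ'_j` are distinct and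
together fill `{0, …, N + M - 1}`; call the two sets `A` and `B`. Then `V_N(μ) = Δ(A)` and
`V_M(μ') = Δ(B)` for the Vandermonde product `Δ(A) = ∏_{a' < a} (a - a')`. With the cross term
`X = ∏_{a ∈ A, b ∈ B} |a - b|` one has `∏_{j < N + M} j! = Δ(A ∪ B) = Δ(A) Δ(B) X`, and also
`∏_{a ∈ A} a! (N + M - 1 - a)! = ∏_{a ∈ A} ∏_{x ≠ a} |a - x| = Δ(A)² X`. Eliminating `X` gives
the identity.
-/

open Finset

open scoped Nat

variable (R : Type*) [CommRing R]

-- `diffProd A A` is `Δ(A)`, and `diffProd A B * diffProd B A = ∏_{a ∈ A, b ∈ B} |a - b|`.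
def diffProd (A B : Finset ℕ) : R := ∏ x ∈ A, ∏ y ∈ B with y < x, ((x : R) - y)

variable {R}

theorem prod_prod_filter_lt_comm {M : Type*} [CommMonoid M] {α : Type*} [LinearOrder α]
    (A B : Finset α) (g : α → α → M) :
    ∏ x ∈ A, ∏ y ∈ B with x < y, g x y = ∏ y ∈ B, ∏ x ∈ A with x < y, g x y :=
  prod_comm' fun x y => by simp only [mem_filter]; tauto

theorem diffProd_union_left {A B : Finset ℕ} (hAB : Disjoint A B) (C : Finset ℕ) :
    diffProd R (A ∪ B) C = diffProd R A C * diffProd R B C :=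
  prod_union hAB

theorem diffProd_union_right (A : Finset ℕ) {B C : Finset ℕ} (hBC : Disjoint B C) :
    diffProd R A (B ∪ C) = diffProd R A B * diffProd R A C := by
  simp only [diffProd, filter_union, ← prod_mul_distrib]
  exact prod_congr rfl fun x _ => prod_union (disjoint_filter_filter hBC)

theorem diffProd_range_right {S : Finset ℕ} {n : ℕ} (hS : S ⊆ range n) :
    diffProd R S (range n) = ∏ s ∈ S, (s ! : R) := by
  refine prod_congr rfl fun s hs => ?_
  have hsn : s < n := mem_range.mp (hS hs)
  rw [show {y ∈ range n | y < s} = range s by ext y; simp only [mem_filter, mem_range]; omega,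
    ← prod_range_add_one_eq_factorial, Nat.cast_prod, ← prod_range_reflect]
  refine prod_congr rfl fun y hy => ?_
  have hys : y < s := mem_range.mp hy
  push_cast [Nat.cast_sub (show 1 ≤ s by omega), Nat.cast_sub (show y ≤ s - 1 by omega)]
  ring

theorem diffProd_range_left {S : Finset ℕ} {n : ℕ} (hS : S ⊆ range n) :
    diffProd R (range n) S = ∏ s ∈ S, ((n - 1 - s) ! : R) := by
  rw [diffProd, ← prod_prod_filter_lt_comm]
  refine prod_congr rfl fun s hs => ?_
  have hsn : s < n := mem_range.mp (hS hs)
  rw [show {x ∈ range n | s < x} = Ico (s + 1) n by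
      ext x; simp only [mem_filter, mem_range, mem_Ico]; omega,
    prod_Ico_eq_prod_range, ← prod_range_add_one_eq_factorial, Nat.cast_prod,
    show n - (s + 1) = n - 1 - s by omega]
  refine prod_congr rfl fun y _ => ?_
  push_cast
  ring

theorem diffProd_range_self (n : ℕ) :
    diffProd R (range n) (range n) = ∏ j ∈ Icc 1 (n - 1), (j ! : R) := by
  rw [diffProd_range_right subset_rfl]
  cases n with
  | zero => rfl
  | succ n =>
    rw [Nat.add_sub_cancel, ← Nat.cast_prod, ← Nat.cast_prod, Nat.prod_range_succ_factorial,
      Nat.prod_Icc_factorial]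

theorem diffProd_mul_prod_factorial_of_union_eq_range {S T : Finset ℕ} {n : ℕ}
    (hST : Disjoint S T) (hU : S ∪ T = range n) :
    diffProd R T T * ∏ s ∈ S, ((s ! : R) * (n - 1 - s) !) =
      (∏ j ∈ Icc 1 (n - 1), (j ! : R)) * diffProd R S S := by
  have hS : S ⊆ range n := hU ▸ subset_union_left
  rw [prod_mul_distrib, ← diffProd_range_right hS, ← diffProd_range_left hS,
    ← diffProd_range_self, ← hU, diffProd_union_left hST, diffProd_union_left hST,
    diffProd_union_right _ hST, diffProd_union_right _ hST]
  ring

theorem diffProd_image {α : Type*} (s : Finset α) {f : α → ℕ} (hf : Set.InjOn f s) :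
    diffProd R (s.image f) (s.image f) = ∏ x ∈ s, ∏ y ∈ s with f y < f x, ((f x : R) - f y) := by
  rw [diffProd, prod_image hf]
  refine prod_congr rfl fun x _ => ?_
  rw [filter_image, prod_image (hf.mono (filter_subset _ s))]

theorem diffProd_image_of_strictMonoOn {α : Type*} [LinearOrder α] (s : Finset α) {f : α → ℕ}
    (hf : StrictMonoOn f s) :
    diffProd R (s.image f) (s.image f) = ∏ j ∈ s, ∏ i ∈ s with i < j, ((f j : R) - f i) := by
  rw [diffProd_image s hf.injOn]
  exact prod_congr rfl fun j hj =>
    prod_congr (filter_congr fun i hi => hf.lt_iff_lt hi hj) fun _ _ => rfl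

theorem diffProd_image_of_strictAntiOn {α : Type*} [LinearOrder α] (s : Finset α) {f : α → ℕ}
    (hf : StrictAntiOn f s) :
    diffProd R (s.image f) (s.image f) = ∏ j ∈ s, ∏ i ∈ s with i < j, ((f i : R) - f j) := by
  rw [diffProd_image s hf.injOn, ← prod_prod_filter_lt_comm]
  exact prod_congr rfl fun i hi =>
    prod_congr (filter_congr fun j hj => hf.lt_iff_gt hj hi) fun _ _ => rfl

theorem prod_Icc_prod_Icc_pred {M : Type*} [CommMonoid M] (m : ℕ) (g : ℕ → ℕ → M) :
    ∏ j ∈ Icc 1 m, ∏ i ∈ Icc 1 (j - 1), g i j =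
      ∏ j ∈ Icc 1 m, ∏ i ∈ Icc 1 m with i < j, g i j := by
  refine prod_congr rfl fun j hj => prod_congr ?_ fun _ _ => rfl
  ext i
  simp only [mem_Icc, mem_filter] at hj ⊢
  omega

section ShiftedParts

variable {l c : ℕ → ℕ} {N M : ℕ}

theorem strictAntiOn_add_sub (hl : Antitone l) :
    StrictAntiOn (fun i => l i + (N - i)) (Icc 1 N : Finset ℕ) := by
  intro i hi j hj hij
  simp only [coe_Icc, Set.mem_Icc] at hi hj
  have := hl hij.le
  dsimp only
  omega

theorem strictMonoOn_add_sub_sub (hc : Antitone c) (hcN : ∀ j, c j ≤ N) :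
    StrictMonoOn (fun j => N + j - 1 - c j) (Icc 1 M : Finset ℕ) := by
  intro i hi j hj hij
  simp only [coe_Icc, Set.mem_Icc] at hi hj
  have := hc hij.le
  have := hcN i
  dsimp only
  omega

theorem vandermonde_eq_diffProd_shiftedParts (hl : Antitone l) :
    ∏ j ∈ Icc 1 N, ∏ i ∈ Icc 1 (j - 1), ((l i : R) - l j + j - i) =
      diffProd R ((Icc 1 N).image fun i => l i + (N - i))
        ((Icc 1 N).image fun i => l i + (N - i)) := by
  rw [diffProd_image_of_strictAntiOn _ (strictAntiOn_add_sub hl), prod_Icc_prod_Icc_pred]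
  refine prod_congr rfl fun j hj => prod_congr rfl fun i hi => ?_
  simp only [mem_filter, mem_Icc] at hi hj
  push_cast [Nat.cast_sub hi.1.2, Nat.cast_sub hj.2]
  ring

theorem vandermonde_eq_diffProd_shiftedConj (hc : Antitone c) (hcN : ∀ j, c j ≤ N) :
    ∏ j ∈ Icc 1 M, ∏ i ∈ Icc 1 (j - 1), ((c i : R) - c j + j - i) =
      diffProd R ((Icc 1 M).image fun j => N + j - 1 - c j)
        ((Icc 1 M).image fun j => N + j - 1 - c j) := by
  rw [diffProd_image_of_strictMonoOn _ (strictMonoOn_add_sub_sub hc hcN), prod_Icc_prod_Icc_pred]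
  refine prod_congr rfl fun j hj => prod_congr rfl fun i hi => ?_
  simp only [mem_filter, mem_Icc] at hi hj
  have hcast (k : ℕ) (hk : 1 ≤ k) : ((N + k - 1 - c k : ℕ) : R) = N + k - 1 - c k := by
    have : N + k - 1 - c k + c k + 1 = N + k := by have := hcN k; omega
    have := congrArg (Nat.cast (R := R)) this
    push_cast at this
    linear_combination this
  rw [hcast i hi.1.1, hcast j hj.1]
  ring

end ShiftedParts

section Conjugate

variable {l c : ℕ → ℕ} {N : ℕ}

theorem le_card_filter_le_iff (hl : Antitone l) {i : ℕ} (j : ℕ) (hi : i ∈ Icc 1 N) :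
    i ≤ #{i' ∈ Icc 1 N | j ≤ l i'} ↔ j ≤ l i := by
  rw [mem_Icc] at hi
  constructor
  · intro h
    by_contra! hlt
    have hsub : {i' ∈ Icc 1 N | j ≤ l i'} ⊆ Icc 1 (i - 1) := by
      intro x hx
      simp only [mem_filter, mem_Icc] at hx ⊢
      by_contra! hxi
      have := hl (show i ≤ x by omega)
      omega
    have := card_le_card hsub
    simp only [Nat.card_Icc] at this
    omega
  · intro h
    have hsub : Icc 1 i ⊆ {i' ∈ Icc 1 N | j ≤ l i'} := fun x hx => by
      simp only [mem_filter, mem_Icc] at hx ⊢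
      exact ⟨⟨hx.1, hx.2.trans hi.2⟩, h.trans (hl hx.2)⟩
    simpa using card_le_card hsub

variable (hc : ∀ j, c j = #{i ∈ Icc 1 N | j ≤ l i})
include hc

theorem antitone_conj : Antitone c := fun j k hjk => by
  rw [hc, hc]
  exact card_le_card (monotone_filter_right _ fun _ _ h => hjk.trans h)

theorem conj_le (j : ℕ) : c j ≤ N :=
  hc j ▸ (card_filter_le _ _).trans (Nat.card_Icc 1 N).le

-- These are the complementary sets of Macdonald, *Symmetric functions and Hall polynomials*, I.(1.7).
theorem disjoint_shiftedParts_shiftedConj (hl : Antitone l) (M : ℕ) :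
    Disjoint ((Icc 1 N).image fun i => l i + (N - i))
      ((Icc 1 M).image fun j => N + j - 1 - c j) := by
  simp only [disjoint_left, mem_image, not_exists, not_and]
  rintro _ ⟨i, hi, rfl⟩ j hj
  have hiff := hc j ▸ le_card_filter_le_iff hl j hi
  have := conj_le hc j
  simp only [mem_Icc] at hi hj
  by_cases h : j ≤ l i
  · have := hiff.mpr h
    omega
  · have := mt hiff.mp h
    omega

theorem shiftedParts_union_shiftedConj (hl : Antitone l) {M : ℕ} (hwidth : l 1 ≤ M) :
    ((Icc 1 N).image fun i => l i + (N - i)) ∪ ((Icc 1 M).image fun j => N + j - 1 - c j) =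
      range (N + M) := by
  have hcN := conj_le hc
  refine eq_of_subset_of_card_le (union_subset ?_ ?_) ?_
  · simp only [image_subset_iff, mem_Icc, mem_range]
    intro i hi
    have := hl hi.1
    omega
  · simp only [image_subset_iff, mem_Icc, mem_range]
    intro j hj
    omega
  · rw [card_union_of_disjoint (disjoint_shiftedParts_shiftedConj hc hl M),
      card_image_of_injOn (strictAntiOn_add_sub hl).injOn,
      card_image_of_injOn (strictMonoOn_add_sub_sub (antitone_conj hc) hcN).injOn]
    simp

end Conjugate

theorem conjugate_vandermonde_identity_general
    (N M : ℕ) (l : ℕ → ℕ) (hmono : ∀ i j, i ≤ j → l j ≤ l i)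
    (hwidth : l 1 ≤ M)
    (c : ℕ → ℕ) (hc : ∀ j, c j = ((Finset.Icc 1 N).filter (fun i => j ≤ l i)).card) :
    (∏ j ∈ Finset.Icc 1 M, ∏ i ∈ Finset.Icc 1 (j - 1),
        ((c i : ℚ) - (c j : ℚ) + (j : ℚ) - (i : ℚ))) =
      (∏ j ∈ Finset.Icc 1 (N + M - 1), (Nat.factorial j : ℚ)) *
      (∏ j ∈ Finset.Icc 1 N, ∏ i ∈ Finset.Icc 1 (j - 1),
        ((l i : ℚ) - (l j : ℚ) + (j : ℚ) - (i : ℚ))) *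
      (∏ i ∈ Finset.Icc 1 N, (1 : ℚ) / (Nat.factorial (l i + (N - i)) : ℚ)) *
      (∏ j ∈ Finset.Icc 1 N, (1 : ℚ) / (Nat.factorial (M + j - 1 - l j) : ℚ)) := by
  have hl : Antitone l := fun i j h => hmono i j h
  have hcore := diffProd_mul_prod_factorial_of_union_eq_range (R := ℚ)
    (disjoint_shiftedParts_shiftedConj hc hl M) (shiftedParts_union_shiftedConj hc hl hwidth)
  have hcompl : ∀ i ∈ Icc 1 N, N + M - 1 - (l i + (N - i)) = M + i - 1 - l i := fun i hi => by
    obtain ⟨hi1, hiN⟩ := mem_Icc.mp hi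
    have := hl hi1
    omega
  rw [prod_image (strictAntiOn_add_sub hl).injOn, prod_congr rfl fun i hi => by rw [hcompl i hi]]
    at hcore
  have hfact : ∏ i ∈ Icc 1 N, ((l i + (N - i)) ! * (M + i - 1 - l i) ! : ℚ) ≠ 0 :=
    prod_ne_zero_iff.mpr fun _ _ => by positivity
  rw [vandermonde_eq_diffProd_shiftedConj (antitone_conj hc) (conj_le hc),
    vandermonde_eq_diffProd_shiftedParts hl, mul_assoc _ (∏ i ∈ Icc 1 N, _),
    ← prod_mul_distrib]
  simp only [one_div, ← mul_inv, prod_inv_distrib]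
  rw [eq_mul_inv_iff_mul_eq₀ hfact, hcore]

/-- Lemma 5.2: for a partition `μ` in an `N × M` box with conjugate `μ'`,
`V_M(μ') = (∏_{j=1}^{N+M−1} j!) · V_N(μ) · W_N(μ) · ∏_{j=1}^N 1/(M + j − 1 − μ_j)!`. -/
theorem conjugate_vandermonde_identity
    (N M : ℕ) (l : ℕ → ℕ) (hmono : ∀ i j, i ≤ j → l j ≤ l i)
    (hlen : ∀ i, N < i → l i = 0) (hwidth : l 1 ≤ M)
    (c : ℕ → ℕ) (hc : ∀ j, c j = ((Finset.Icc 1 N).filter (fun i => j ≤ l i)).card) :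
    (∏ j ∈ Finset.Icc 1 M, ∏ i ∈ Finset.Icc 1 (j - 1),
        ((c i : ℚ) - (c j : ℚ) + (j : ℚ) - (i : ℚ))) =
      (∏ j ∈ Finset.Icc 1 (N + M - 1), (Nat.factorial j : ℚ)) *
      (∏ j ∈ Finset.Icc 1 N, ∏ i ∈ Finset.Icc 1 (j - 1),
        ((l i : ℚ) - (l j : ℚ) + (j : ℚ) - (i : ℚ))) *
      (∏ i ∈ Finset.Icc 1 N, (1 : ℚ) / (Nat.factorial (l i + (N - i)) : ℚ)) *
      (∏ j ∈ Finset.Icc 1 N, (1 : ℚ) / (Nat.factorial (M + j - 1 - l j) : ℚ)) :=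
  conjugate_vandermonde_identity_general N M l hmono hwidth c hc
end

section
/- For any partition λ of N, the number of standard Young tableaux of shape λ satisfies f^λ = N! · V_ℓ(λ) · W_ℓ(λ), where ℓ = ℓ(λ) is the number of nonzero parts, V_ℓ(λ) = ∏_{1≤i<j≤ℓ}(λ_i − λ_j + j − i) and W_ℓ(λ) = ∏_{i=1}^ℓ 1/(λ_i + ℓ − i)!. -/
open Finset

/-- The set of cells of the Young diagram of the (1-indexed) partition `l`. -/
def youngCells (l : ℕ → ℕ) : Set (ℕ × ℕ) :=
  {p | 1 ≤ p.1 ∧ 1 ≤ p.2 ∧ p.2 ≤ l p.1}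

/-- `T` is a standard Young tableau of shape `l` with entries `{1,…,N}`:
a bijection from the cells onto `{1,…,N}` which strictly increases along rows
and columns (and is `0` outside the diagram). -/
def IsSYT (l : ℕ → ℕ) (N : ℕ) (T : ℕ × ℕ → ℕ) : Prop :=
  Set.BijOn T (youngCells l) (Set.Icc 1 N) ∧
  (∀ i j : ℕ, (i, j) ∈ youngCells l → (i, j + 1) ∈ youngCells l →
      T (i, j) < T (i, j + 1)) ∧
  (∀ i j : ℕ, (i, j) ∈ youngCells l → (i + 1, j) ∈ youngCells l →
      T (i, j) < T (i + 1, j)) ∧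
  (∀ p : ℕ × ℕ, p ∉ youngCells l → T p = 0)

/-!
Removing the largest entry of a standard tableau leaves a standard tableau of the shape with one
corner cell removed, so `f^λ = ∑ f^(λ - e_r)` over the corners `r`. The right-hand side `F(λ)`
satisfies the same recursion: in the shifted coordinates `x_i = λ_i + ℓ - i`,
`F(λ - e_r) = F(λ) / N · x_r ∏_{j ≠ r} (x_r - x_j - 1) / (x_r - x_j)`. This weight vanishes when
`r` is not a corner, and the weights sum to `∑ x_r - C(ℓ, 2) = N`: expanding the product over
subsets reduces that identity to divided differences of the polynomial `X`, which Lagrange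
interpolation computes. Both sides equal `1` for the empty partition.
-/

open Function
open scoped Nat

section DividedDifferences

variable {K : Type*} [Field K] {ι : Type*} [DecidableEq ι]

theorem Finset.sum_sum_powerset_erase {M : Type*} [AddCommMonoid M] (s : Finset ι)
    (f : ι → Finset ι → M) :
    ∑ i ∈ s, ∑ t ∈ (s.erase i).powerset, f i t =
      ∑ t ∈ s.powerset, ∑ i ∈ t, f i (t.erase i) := by
  rw [sum_sigma', sum_sigma']
  refine sum_nbij' (fun p => ⟨insert p.1 p.2, p.1⟩) (fun q => ⟨q.2, q.1.erase q.2⟩)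
    ?_ ?_ ?_ ?_ ?_ <;> simp only [mem_sigma, mem_powerset]
  · rintro ⟨i, t⟩ ⟨hi, ht⟩
    exact ⟨insert_subset hi (ht.trans (erase_subset _ _)), mem_insert_self _ _⟩
  · rintro ⟨t, i⟩ ⟨ht, hi⟩
    exact ⟨ht hi, erase_subset_erase _ ht⟩
  · rintro ⟨i, t⟩ ⟨-, ht⟩
    simp [erase_insert fun h => (mem_erase.mp (ht h)).1 rfl]
  · rintro ⟨t, i⟩ ⟨-, hi⟩
    simp [insert_erase hi]
  · rintro ⟨i, t⟩ ⟨-, ht⟩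
    simp [erase_insert fun h => (mem_erase.mp (ht h)).1 rfl]

theorem sum_div_prod_erase_sub_of_two_le {s : Finset ι} {x : ι → K} (hx : Set.InjOn x s)
    (hs : 2 ≤ #s) :
    ∑ i ∈ s, x i / ∏ j ∈ s.erase i, (x i - x j) = if #s = 2 then 1 else 0 := by
  have hdeg : (Polynomial.X : Polynomial K).degree < #s := by
    rw [Polynomial.degree_X]; exact_mod_cast hs
  have hcoeff := Lagrange.coeff_eq_sum hx hdeg
  simp only [Polynomial.eval_X, Polynomial.coeff_X] at hcoeff
  simp only [← hcoeff, show 1 = #s - 1 ↔ #s = 2 by omega]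

theorem sum_mul_prod_erase_sub_sub_one_div {s : Finset ι} {x : ι → K} (hx : Set.InjOn x s) :
    ∑ i ∈ s, x i * ∏ j ∈ s.erase i, (x i - x j - 1) / (x i - x j) =
      ∑ i ∈ s, x i - (#s).choose 2 := by
  have hexpand : ∀ i ∈ s, x i * ∏ j ∈ s.erase i, (x i - x j - 1) / (x i - x j) =
      ∑ t ∈ (s.erase i).powerset, x i * ∏ j ∈ t, -(x i - x j)⁻¹ := by
    intro i hi
    rw [← mul_sum, ← prod_one_add]
    congr 1
    refine prod_congr rfl fun j hj => ?_
    have : x i - x j ≠ 0 :=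
      sub_ne_zero.mpr fun h => ne_of_mem_erase hj (hx hi (mem_of_mem_erase hj) h).symm
    field_simp
    ring
  have hblock : ∀ t ∈ s.powerset, ∑ i ∈ t, x i * ∏ j ∈ t.erase i, -(x i - x j)⁻¹ =
      (if #t = 1 then ∑ i ∈ t, x i else 0) - if #t = 2 then 1 else 0 := by
    intro t ht
    rcases Nat.lt_or_ge #t 2 with h | h
    · obtain h0 | h1 : #t = 0 ∨ #t = 1 := by omega
      · simp [card_eq_zero.mp h0]
      · obtain ⟨a, rfl⟩ := card_eq_one.mp h1
        simp
    · have hsign : ∀ i ∈ t, x i * ∏ j ∈ t.erase i, -(x i - x j)⁻¹ =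
          (-1) ^ (#t - 1) * (x i / ∏ j ∈ t.erase i, (x i - x j)) := by
        intro i hi
        rw [prod_neg, prod_inv_distrib, card_erase_of_mem hi]
        ring
      rw [sum_congr rfl hsign, ← mul_sum,
        sum_div_prod_erase_sub_of_two_le (hx.mono (mem_powerset.mp ht)) h]
      rcases h.eq_or_lt with h2 | h2
      · simp [← h2]
      · rw [if_neg h2.ne', if_neg (by omega), mul_zero, sub_zero]
  rw [sum_congr rfl hexpand, sum_sum_powerset_erase, sum_congr rfl hblock, sum_sub_distrib,
    ← sum_filter, ← sum_filter, ← powersetCard_eq_filter, ← powersetCard_eq_filter,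
    powersetCard_one, sum_map, sum_const, card_powersetCard]
  simp

end DividedDifferences

section TriangularProducts

variable {M : Type*} [CommMonoid M]

@[to_additive]
theorem Finset.prod_Icc_reflect (f : ℕ → M) (n : ℕ) :
    ∏ i ∈ Icc 1 n, f (n - i) = ∏ i ∈ range n, f i :=
  prod_nbij' (n - ·) (n - ·) (by intro i; simp; omega) (by intro i; simp; omega)
    (by intro i; simp; omega) (by intro i; simp; omega) (fun _ _ => rfl)

theorem Finset.prod_Icc_sub_one_eq_prod_range (f : ℕ → M) (n : ℕ) :
    ∏ i ∈ Icc 1 n, f (i - 1) = ∏ i ∈ range n, f i :=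
  prod_nbij' (· - 1) (· + 1) (by intro i; simp; omega) (by intro i; simp)
    (by intro i; simp; omega) (by intro i; simp) (fun _ _ => rfl)

theorem Finset.prod_Icc_prod_Icc_pred_eq (g : ℕ → ℕ → M) {n r : ℕ} (hr : r ∈ Icc 1 n) :
    ∏ j ∈ Icc 1 n, ∏ i ∈ Icc 1 (j - 1), g i j =
      (∏ i ∈ Icc 1 (r - 1), g i r) * (∏ j ∈ Ioc r n, g r j) *
        ∏ j ∈ (Icc 1 n).erase r, ∏ i ∈ (Icc 1 (j - 1)).erase r, g i j := by
  have hrow : ∀ j ∈ (Icc 1 n).erase r, ∏ i ∈ Icc 1 (j - 1), g i j =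
      (if r < j then g r j else 1) * ∏ i ∈ (Icc 1 (j - 1)).erase r, g i j := by
    intro j hj
    split_ifs with hrj
    · exact (mul_prod_erase _ _ (mem_Icc.mpr ⟨(mem_Icc.mp hr).1, by omega⟩)).symm
    · rw [one_mul, erase_eq_of_notMem (by simp; omega)]
  have hIoc : ((Icc 1 n).erase r).filter (r < ·) = Ioc r n := by
    ext j; simp only [mem_filter, mem_erase, mem_Icc, mem_Ioc] at hr ⊢; omega
  rw [← mul_prod_erase _ _ hr, prod_congr rfl hrow, prod_mul_distrib, ← prod_filter, hIoc,
    mul_assoc]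

end TriangularProducts

theorem prod_prod_natCast_sub_eq_prod_factorial (n : ℕ) :
    ∏ j ∈ Icc 1 n, ∏ i ∈ Icc 1 (j - 1), ((j : ℚ) - i) = ∏ i ∈ range n, (i ! : ℚ) := by
  have hrow : ∀ j ∈ Icc 1 n, ∏ i ∈ Icc 1 (j - 1), ((j : ℚ) - i) = ((j - 1) ! : ℚ) := by
    intro j hj
    have hshift : ∀ i ∈ Icc 1 (j - 1), ((j : ℚ) - i) = ((j - 1 - i : ℕ) : ℚ) + 1 := by
      intro i hi
      simp only [mem_Icc] at hi hj
      push_cast [Nat.cast_sub (by omega : i ≤ j - 1), Nat.cast_sub hj.1]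
      ring
    rw [prod_congr rfl hshift, prod_Icc_reflect (fun i : ℕ => (i : ℚ) + 1),
      ← prod_range_add_one_eq_factorial]
    push_cast; rfl
  rw [prod_congr rfl hrow, prod_Icc_sub_one_eq_prod_range (fun i => (i ! : ℚ))]

theorem prod_prod_update_pred_sub {K : Type*} [Field K] (x : ℕ → K) {n r : ℕ}
    (hx : Set.InjOn x (Icc 1 n)) (hr : r ∈ Icc 1 n) :
    ∏ j ∈ Icc 1 n, ∏ i ∈ Icc 1 (j - 1), (update x r (x r - 1) i - update x r (x r - 1) j) =
      (∏ j ∈ Icc 1 n, ∏ i ∈ Icc 1 (j - 1), (x i - x j)) *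
        ∏ j ∈ (Icc 1 n).erase r, (x r - x j - 1) / (x r - x j) := by
  set y := update x r (x r - 1)
  have hy : ∀ i ≠ r, y i = x i := fun i hi => update_of_ne hi _ _
  have hyr : y r = x r - 1 := update_self ..
  have hsplit : (Icc 1 n).erase r = Icc 1 (r - 1) ∪ Ioc r n := by
    ext j; simp only [mem_erase, mem_Icc, mem_union, mem_Ioc] at hr ⊢; omega
  have hdisj : Disjoint (Icc 1 (r - 1)) (Ioc r n) := by
    rw [disjoint_left]; intro j; simp only [mem_Icc, mem_Ioc]; omega
  have hratio : ∀ j ∈ (Icc 1 n).erase r,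
      x r - x j - 1 = (x r - x j) * ((x r - x j - 1) / (x r - x j)) := by
    intro j hj
    have : x r - x j ≠ 0 :=
      sub_ne_zero.mpr fun h => ne_of_mem_erase hj (hx (mem_of_mem_erase hj) hr h.symm)
    field_simp
  have hbelow : ∀ i ∈ Icc 1 (r - 1),
      y i - y r = (x i - x r) * ((x r - x i - 1) / (x r - x i)) := by
    intro i hi
    have := hratio i (hsplit ▸ mem_union_left _ hi)
    rw [hy i (by simp at hi; omega), hyr]
    linear_combination -this
  have habove : ∀ j ∈ Ioc r n, y r - y j = (x r - x j) * ((x r - x j - 1) / (x r - x j)) := by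
    intro j hj
    rw [hy j (by simp at hj; omega), hyr, ← hratio j (hsplit ▸ mem_union_right _ hj)]
    ring
  have hrest : ∀ j ∈ (Icc 1 n).erase r, ∏ i ∈ (Icc 1 (j - 1)).erase r, (y i - y j) =
      ∏ i ∈ (Icc 1 (j - 1)).erase r, (x i - x j) := fun j hj =>
    prod_congr rfl fun i hi => by rw [hy i (ne_of_mem_erase hi), hy j (ne_of_mem_erase hj)]
  have hquot : ∏ j ∈ (Icc 1 n).erase r, (x r - x j - 1) / (x r - x j) =
      (∏ j ∈ Icc 1 (r - 1), (x r - x j - 1) / (x r - x j)) *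
        ∏ j ∈ Ioc r n, (x r - x j - 1) / (x r - x j) := by
    rw [hsplit, prod_union hdisj]
  rw [prod_Icc_prod_Icc_pred_eq (fun i j => y i - y j) hr,
    prod_Icc_prod_Icc_pred_eq (fun i j => x i - x j) hr, prod_congr rfl hbelow,
    prod_congr rfl habove, prod_congr rfl hrest, hquot, prod_mul_distrib, prod_mul_distrib]
  ring

def frobeniusFormula (l : ℕ → ℕ) (ell N : ℕ) : ℚ :=
  (N ! : ℚ) *
    (∏ j ∈ Icc 1 ell, ∏ i ∈ Icc 1 (j - 1), ((l i : ℚ) - (l j : ℚ) + (j : ℚ) - (i : ℚ))) *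
    ∏ i ∈ Icc 1 ell, (1 : ℚ) / ((l i + (ell - i)) ! : ℚ)

def shiftedPart (l : ℕ → ℕ) (ell i : ℕ) : ℚ := l i + ell - i

def cornerWeight (l : ℕ → ℕ) (ell r : ℕ) : ℚ :=
  shiftedPart l ell r * ∏ j ∈ (Icc 1 ell).erase r,
    (shiftedPart l ell r - shiftedPart l ell j - 1) / (shiftedPart l ell r - shiftedPart l ell j)

def corners (l : ℕ → ℕ) (ell : ℕ) : Finset ℕ :=
  (Icc 1 ell).filter fun r => l (r + 1) < l r

section FrobeniusFormula

variable {l : ℕ → ℕ} {ell : ℕ}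

theorem frobeniusFormula_zero (hl : ∀ i ∈ Icc 1 ell, l i = 0) : frobeniusFormula l ell 0 = 1 := by
  have hV : ∏ j ∈ Icc 1 ell, ∏ i ∈ Icc 1 (j - 1), ((l i : ℚ) - (l j : ℚ) + (j : ℚ) - (i : ℚ)) =
      ∏ j ∈ Icc 1 ell, ∏ i ∈ Icc 1 (j - 1), ((j : ℚ) - i) :=
    prod_congr rfl fun j hj => prod_congr rfl fun i hi => by
      rw [hl j hj, hl i (by simp at hi hj ⊢; omega)]; ring
  have hW : ∏ i ∈ Icc 1 ell, (1 : ℚ) / ((l i + (ell - i)) ! : ℚ) =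
      (∏ i ∈ range ell, (i ! : ℚ))⁻¹ := by
    rw [← prod_Icc_reflect, ← prod_inv_distrib]
    exact prod_congr rfl fun i hi => by rw [hl i hi, zero_add, one_div]
  rw [frobeniusFormula, hV, hW, prod_prod_natCast_sub_eq_prod_factorial, Nat.factorial_zero,
    Nat.cast_one, one_mul, mul_inv_cancel₀ (prod_ne_zero_iff.mpr fun i _ => by positivity)]

theorem shiftedPart_strictAnti (hl : Antitone l) : StrictAnti (shiftedPart l ell) := by
  intro i j hij
  have : (l j : ℚ) ≤ l i := by exact_mod_cast hl hij.le
  have : (i : ℚ) < j := by exact_mod_cast hij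
  unfold shiftedPart; linarith

theorem shiftedPart_update_pred {r : ℕ} (hlr : 1 ≤ l r) :
    shiftedPart (update l r (l r - 1)) ell =
      update (shiftedPart l ell) r (shiftedPart l ell r - 1) := by
  ext i
  rcases eq_or_ne i r with rfl | hir
  · simp [shiftedPart, Nat.cast_sub hlr]; ring
  · simp [shiftedPart, update_of_ne hir]

theorem natCast_add_sub_eq_shiftedPart {i : ℕ} (hi : i ≤ ell) :
    ((l i + (ell - i) : ℕ) : ℚ) = shiftedPart l ell i := by
  rw [shiftedPart, Nat.cast_add, Nat.cast_sub hi]; ring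

theorem sum_shiftedPart {N : ℕ} (hsum : ∑ i ∈ Icc 1 ell, l i = N) :
    ∑ i ∈ Icc 1 ell, shiftedPart l ell i = N + ell.choose 2 := by
  have hstair : ∑ i ∈ Icc 1 ell, ((ell : ℚ) - i) = ell.choose 2 := by
    rw [← sum_congr rfl fun i hi => Nat.cast_sub (mem_Icc.mp hi).2, ← Nat.cast_sum,
      sum_Icc_reflect (fun i => i), sum_range_id, Nat.choose_two_right]
  simp only [shiftedPart, add_sub_assoc, sum_add_distrib, hstair, ← hsum, Nat.cast_sum]

theorem sum_cornerWeight {N : ℕ} (hl : Antitone l) (hsum : ∑ i ∈ Icc 1 ell, l i = N) :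
    ∑ r ∈ Icc 1 ell, cornerWeight l ell r = N := by
  simp only [cornerWeight]
  rw [sum_mul_prod_erase_sub_sub_one_div
    (shiftedPart_strictAnti hl).injective.injOn, Nat.card_Icc, Nat.add_sub_cancel,
    sum_shiftedPart hsum, add_sub_cancel_right]

theorem cornerWeight_eq_zero {r : ℕ} (hl : Antitone l) (hsupp : ∀ i, ell < i → l i = 0)
    (hr : r ∈ Icc 1 ell) (hr' : r ∉ corners l ell) : cornerWeight l ell r = 0 := by
  have hlr : l (r + 1) = l r :=
    le_antisymm (hl (Nat.le_succ r)) (not_lt.mp fun h => hr' (mem_filter.mpr ⟨hr, h⟩))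
  rw [mem_Icc] at hr
  rcases hr.2.lt_or_eq with hlt | rfl
  · refine mul_eq_zero_of_right _ (prod_eq_zero (i := r + 1) (by simp; omega) ?_)
    simp [shiftedPart, hlr]
  · refine mul_eq_zero_of_left ?_ _
    simp [shiftedPart, ← hlr, hsupp _ (Nat.lt_succ_self r)]

theorem frobeniusFormula_update_pred {N r : ℕ} (hl : Antitone l) (hr : r ∈ Icc 1 ell)
    (hlr : 1 ≤ l r) :
    frobeniusFormula (update l r (l r - 1)) ell N =
      frobeniusFormula l ell (N + 1) / (N + 1) * cornerWeight l ell r := by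
  have hV : ∀ m : ℕ → ℕ, ∏ j ∈ Icc 1 ell, ∏ i ∈ Icc 1 (j - 1),
      ((m i : ℚ) - (m j : ℚ) + (j : ℚ) - (i : ℚ)) = ∏ j ∈ Icc 1 ell, ∏ i ∈ Icc 1 (j - 1),
        (shiftedPart m ell i - shiftedPart m ell j) := fun m =>
    prod_congr rfl fun j _ => prod_congr rfl fun i _ => by unfold shiftedPart; ring
  have hW : ∏ i ∈ Icc 1 ell, (1 : ℚ) / ((update l r (l r - 1) i + (ell - i)) ! : ℚ) =
      (∏ i ∈ Icc 1 ell, (1 : ℚ) / ((l i + (ell - i)) ! : ℚ)) * shiftedPart l ell r := by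
    rw [← mul_prod_erase _ _ hr,
      ← mul_prod_erase _ (fun i => (1 : ℚ) / ((l i + (ell - i)) ! : ℚ)) hr,
      prod_congr rfl fun i hi => by rw [update_of_ne (ne_of_mem_erase hi)], update_self,
      ← natCast_add_sub_eq_shiftedPart (mem_Icc.mp hr).2,
      show l r + (ell - r) = l r - 1 + (ell - r) + 1 by omega, Nat.factorial_succ]
    push_cast
    field_simp
  rw [frobeniusFormula, frobeniusFormula, cornerWeight, hV, hV, shiftedPart_update_pred hlr,
    prod_prod_update_pred_sub _ (shiftedPart_strictAnti hl).injective.injOn hr, hW,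
    Nat.factorial_succ]
  push_cast
  field_simp

theorem sum_corners_frobeniusFormula_update_pred {N : ℕ} (hl : Antitone l)
    (hsupp : ∀ i, ell < i → l i = 0) (hsum : ∑ i ∈ Icc 1 ell, l i = N + 1) :
    ∑ r ∈ corners l ell, frobeniusFormula (update l r (l r - 1)) ell N =
      frobeniusFormula l ell (N + 1) := by
  calc ∑ r ∈ corners l ell, frobeniusFormula (update l r (l r - 1)) ell N
      = ∑ r ∈ corners l ell, frobeniusFormula l ell (N + 1) / (N + 1) * cornerWeight l ell r :=
        sum_congr rfl fun r hr => by
          obtain ⟨hr, hcorner⟩ := mem_filter.mp hr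
          exact frobeniusFormula_update_pred hl hr (by omega)
    _ = ∑ r ∈ Icc 1 ell, frobeniusFormula l ell (N + 1) / (N + 1) * cornerWeight l ell r :=
        sum_subset (filter_subset _ _) fun r hr hr' => by
          rw [cornerWeight_eq_zero hl hsupp hr hr', mul_zero]
    _ = frobeniusFormula l ell (N + 1) := by
      rw [← mul_sum, sum_cornerWeight hl hsum]
      push_cast
      field_simp

end FrobeniusFormula

section Tableaux

variable {l : ℕ → ℕ} {N r : ℕ} {T : ℕ × ℕ → ℕ}

theorem mem_youngCells {i j : ℕ} : (i, j) ∈ youngCells l ↔ 1 ≤ i ∧ 1 ≤ j ∧ j ≤ l i := Iff.rfl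

theorem youngCells_update_pred (l : ℕ → ℕ) (r : ℕ) :
    youngCells (update l r (l r - 1)) = youngCells l \ {(r, l r)} := by
  ext ⟨i, j⟩
  simp only [mem_youngCells, Set.mem_sdiff, Set.mem_singleton_iff, Prod.mk.injEq,
    update_apply]
  split_ifs with h <;> [subst h; skip] <;> omega

theorem IsSYT.le (hT : IsSYT l N T) (p : ℕ × ℕ) : T p ≤ N := by
  by_cases hp : p ∈ youngCells l
  · exact (hT.1.mapsTo hp).2
  · simp [hT.2.2.2 p hp]

theorem IsSYT.ext {T' : ℕ × ℕ → ℕ} (hT : IsSYT l N T) (hT' : IsSYT l N T')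
    (h : Set.EqOn T T' (youngCells l)) : T = T' := by
  funext p
  by_cases hp : p ∈ youngCells l
  · exact h hp
  · rw [hT.2.2.2 p hp, hT'.2.2.2 p hp]

instance (l : ℕ → ℕ) (N : ℕ) : Finite {T // IsSYT l N T} := by
  by_cases hfin : (youngCells l).Finite
  · have := hfin.to_subtype
    refine Finite.of_injective
      (fun T (c : youngCells l) => (⟨T.1 c, T.2.1.mapsTo c.2⟩ : Set.Icc 1 N))
      fun T T' h => Subtype.ext (T.2.ext T'.2 fun p hp => ?_)
    exact congrArg Subtype.val (congrFun h ⟨p, hp⟩)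
  · have : IsEmpty {T // IsSYT l N T} :=
      ⟨fun T => hfin (Set.Finite.of_injOn T.2.1.mapsTo T.2.1.injOn (Set.finite_Icc 1 N))⟩
    infer_instance

theorem card_isSYT_zero (h : youngCells l = ∅) : Nat.card {T // IsSYT l 0 T} = 1 := by
  have hT0 : IsSYT l 0 0 := by
    refine ⟨?_, ?_, ?_, fun _ _ => rfl⟩
    · rw [h, Set.Icc_eq_empty (by omega)]; exact Set.bijOn_empty _
    all_goals simp [h]
  exact Nat.card_eq_one_iff_unique.mpr
    ⟨⟨fun T T' => Subtype.ext (T.2.ext T'.2 (by simp [h]))⟩, ⟨⟨0, hT0⟩⟩⟩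

theorem IsSYT.exists_corner (hT : IsSYT l (N + 1) T) :
    ∃ r, 1 ≤ r ∧ l (r + 1) < l r ∧ T (r, l r) = N + 1 := by
  obtain ⟨⟨i, j⟩, hp, hTp⟩ := hT.1.surjOn (Set.right_mem_Icc.mpr (Nat.le_add_left 1 N))
  obtain ⟨hi, hj, hjl⟩ := mem_youngCells.mp hp
  have hrow : j = l i := by
    by_contra hne
    have := hT.2.1 i j hp (mem_youngCells.mpr ⟨hi, by omega, by omega⟩)
    have := hT.le (i, j + 1)
    omega
  have hcol : l (i + 1) < l i := by
    by_contra hge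
    have := hT.2.2.1 i j hp (mem_youngCells.mpr ⟨by omega, hj, by omega⟩)
    have := hT.le (i + 1, j)
    omega
  exact ⟨i, hi, hcol, hrow ▸ hTp⟩

theorem IsSYT.remove_largest_entry (hT : IsSYT l (N + 1) T) (hr : 1 ≤ r) (hlr : 1 ≤ l r)
    (hTr : T (r, l r) = N + 1) :
    IsSYT (update l r (l r - 1)) N (update T (r, l r) 0) := by
  have hc : (r, l r) ∈ youngCells l := mem_youngCells.mpr ⟨hr, hlr, le_rfl⟩
  simp only [IsSYT, youngCells_update_pred]
  have hsub : youngCells l \ {(r, l r)} ⊆ youngCells l := Set.sdiff_subset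
  have heq : Set.EqOn (update T (r, l r) 0) T (youngCells l \ {(r, l r)}) :=
    fun p hp => update_of_ne hp.2 _ _
  refine ⟨?_, fun i j h h' => ?_, fun i j h h' => ?_, fun p hp => ?_⟩
  · have hIcc : Set.Icc 1 (N + 1) \ {T (r, l r)} = Set.Icc 1 N := by
      ext m; simp only [Set.mem_sdiff, Set.mem_Icc, Set.mem_singleton_iff, hTr]; omega
    exact hIcc ▸ (hT.1.sdiff_singleton hc).congr heq.symm
  · rw [heq h, heq h']; exact hT.2.1 i j (hsub h) (hsub h')
  · rw [heq h, heq h']; exact hT.2.2.1 i j (hsub h) (hsub h')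
  · rcases eq_or_ne p (r, l r) with rfl | hpc
    · exact update_self ..
    · rw [update_of_ne hpc]
      exact hT.2.2.2 p fun h => hp ⟨h, hpc⟩

theorem IsSYT.add_largest_entry (hT : IsSYT (update l r (l r - 1)) N T) (hr : 1 ≤ r)
    (hcorner : l (r + 1) < l r) :
    IsSYT l (N + 1) (update T (r, l r) (N + 1)) := by
  have hle := hT.le
  simp only [IsSYT, youngCells_update_pred] at hT
  set T' := update T (r, l r) (N + 1)
  have hc : (r, l r) ∈ youngCells l := mem_youngCells.mpr ⟨hr, by omega, le_rfl⟩
  have heq : Set.EqOn T' T (youngCells l \ {(r, l r)}) :=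
    fun p hp => update_of_ne hp.2 _ _
  have hTc : T' (r, l r) = N + 1 := update_self ..
  have hmono : ∀ p q, p ∈ youngCells l → q ∈ youngCells l → p ≠ (r, l r) →
      (q ≠ (r, l r) → T p < T q) → T' p < T' q := by
    intro p q hp hq hpc hlt
    rcases eq_or_ne q (r, l r) with rfl | hqc
    · rw [heq ⟨hp, hpc⟩, hTc]; exact Nat.lt_succ_of_le (hle p)
    · rw [heq ⟨hp, hpc⟩, heq ⟨hq, hqc⟩]; exact hlt hqc
  refine ⟨?_, fun i j h h' => ?_, fun i j h h' => ?_, fun p hp => ?_⟩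
  · have hcells : insert (r, l r) (youngCells l \ {(r, l r)}) = youngCells l := by
      rw [Set.insert_sdiff_singleton, Set.insert_eq_of_mem hc]
    have hIcc : insert (T' (r, l r)) (Set.Icc 1 N) = Set.Icc 1 (N + 1) := by
      ext m; simp only [Set.mem_insert_iff, Set.mem_Icc, hTc]; omega
    exact hcells ▸ hIcc ▸ (hT.1.congr heq.symm).insert (by simp [hTc])
  · have hpc : (i, j) ≠ (r, l r) := by
      rintro ⟨⟩
      exact absurd (mem_youngCells.mp h').2.2 (by omega)
    exact hmono _ _ h h' hpc fun hqc => hT.2.1 i j ⟨h, hpc⟩ ⟨h', hqc⟩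
  · have hpc : (i, j) ≠ (r, l r) := by
      rintro ⟨⟩
      exact absurd (mem_youngCells.mp h').2.2 (by omega)
    exact hmono _ _ h h' hpc fun hqc => hT.2.2.1 i j ⟨h, hpc⟩ ⟨h', hqc⟩
  · have hpc : p ≠ (r, l r) := fun h => hp (h ▸ hc)
    rw [show T' p = T p from update_of_ne hpc _ _]
    exact hT.2.2.2 p fun h => hp h.1

theorem card_isSYT_succ {ell : ℕ} (hsupp : ∀ i, ell < i → l i = 0) :
    Nat.card {T // IsSYT l (N + 1) T} =
      ∑ r ∈ corners l ell, Nat.card {T // IsSYT (update l r (l r - 1)) N T} := by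
  have hcorner : ∀ r ∈ corners l ell, 1 ≤ r ∧ l (r + 1) < l r := fun r hr => by
    obtain ⟨hr, hlt⟩ := mem_filter.mp hr
    exact ⟨(mem_Icc.mp hr).1, hlt⟩
  let add : (Σ r : corners l ell, {T // IsSYT (update l r (l r - 1)) N T}) →
      {T // IsSYT l (N + 1) T} := fun ⟨r, T⟩ =>
    ⟨update T.1 (r, l r) (N + 1),
      T.2.add_largest_entry (hcorner r r.2).1 (hcorner r r.2).2⟩
  have hinj : Function.Injective add := by
    rintro ⟨⟨r, hr⟩, ⟨T, hT⟩⟩ ⟨⟨r', hr'⟩, ⟨T', hT'⟩⟩ h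
    have h : update T (r, l r) (N + 1) = update T' (r', l r') (N + 1) :=
      congrArg Subtype.val h
    obtain rfl : r = r' := by
      by_contra hne
      have := congrFun h (r, l r)
      rw [update_self, update_of_ne (by simp [hne])] at this
      exact absurd (hT'.le (r, l r)) (by omega)
    obtain rfl : T = T' := by
      refine hT.ext hT' fun p hp => ?_
      have hpc : p ≠ (r, l r) := by rw [youngCells_update_pred] at hp; exact hp.2
      simpa [update_of_ne hpc] using congrFun h p
    rfl
  have hsurj : Function.Surjective add := by
    rintro ⟨T, hT⟩
    obtain ⟨r, hr, hlt, hTr⟩ := hT.exists_corner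
    have hr' : r ∈ corners l ell := mem_filter.mpr ⟨mem_Icc.mpr ⟨hr, by
      by_contra h; have := hsupp r (by omega); omega⟩, hlt⟩
    refine ⟨⟨⟨r, hr'⟩, ⟨_, hT.remove_largest_entry hr (Nat.one_le_of_lt hlt) hTr⟩⟩,
      Subtype.ext ?_⟩
    change update (update T (r, l r) 0) (r, l r) (N + 1) = T
    rw [update_idem, ← hTr, update_eq_self]
  rw [← Nat.card_eq_of_bijective add ⟨hinj, hsurj⟩, Nat.card_sigma,
    sum_coe_sort (corners l ell) fun r => Nat.card {T // IsSYT (update l r (l r - 1)) N T}]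

end Tableaux

theorem Antitone.update_pred {l : ℕ → ℕ} {r : ℕ} (hl : Antitone l) (hr : l (r + 1) < l r) :
    Antitone (update l r (l r - 1)) := by
  intro i j hij
  rcases eq_or_ne j r with rfl | hj
  · rcases eq_or_ne i j with rfl | hi
    · rfl
    · rw [update_self, update_of_ne hi]
      exact (Nat.sub_le _ _).trans (hl hij)
  · rw [update_of_ne hj]
    rcases eq_or_ne i r with rfl | hi
    · rw [update_self]
      have := hl (show i + 1 ≤ j by omega)
      omega
    · rw [update_of_ne hi]
      exact hl hij

-- `ell` only bounds the length, so it stays fixed along the induction even when a part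
-- drops to zero.
theorem card_isSYT_eq_frobeniusFormula {l : ℕ → ℕ} {ell N : ℕ} (hl : Antitone l)
    (hsupp : ∀ i, ell < i → l i = 0) (hsum : ∑ i ∈ Icc 1 ell, l i = N) :
    (Nat.card {T // IsSYT l N T} : ℚ) = frobeniusFormula l ell N := by
  induction N generalizing l with
  | zero =>
    have hzero : ∀ i ∈ Icc 1 ell, l i = 0 := sum_eq_zero_iff.mp hsum
    have hcells : youngCells l = ∅ := Set.eq_empty_of_forall_notMem fun ⟨i, j⟩ hp => by
      obtain ⟨hi, hj, hjl⟩ := mem_youngCells.mp hp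
      rcases le_or_gt i ell with h | h
      · have := hzero i (mem_Icc.mpr ⟨hi, h⟩); omega
      · have := hsupp i h; omega
    rw [card_isSYT_zero hcells, frobeniusFormula_zero hzero, Nat.cast_one]
  | succ N ih =>
    rw [card_isSYT_succ hsupp, Nat.cast_sum,
      ← sum_corners_frobeniusFormula_update_pred hl hsupp hsum]
    refine sum_congr rfl fun r hr => ?_
    obtain ⟨hr, hlt⟩ := mem_filter.mp hr
    refine ih (hl.update_pred hlt) (fun i hi => ?_) ?_
    · rw [update_of_ne (by simp at hr; omega)]
      exact hsupp i hi
    · rw [← add_sum_erase _ _ hr] at hsum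
      rw [sum_update_of_mem hr, sdiff_singleton_eq_erase]
      omega

/-- Frobenius formula: for a partition `λ` of `N` with `ell` nonzero parts,
`f^λ = N! · V_ell(λ) · W_ell(λ)`. -/
theorem frobenius_formula
    (N : ℕ) (l : ℕ → ℕ) (hmono : ∀ i j, i ≤ j → l j ≤ l i)
    (ell : ℕ) (hell : ∀ i, 1 ≤ i → (0 < l i ↔ i ≤ ell))
    (hsum : ∑ i ∈ Finset.Icc 1 ell, l i = N) :
    (Nat.card {T : ℕ × ℕ → ℕ // IsSYT l N T} : ℚ) =
      (Nat.factorial N : ℚ) *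
      (∏ j ∈ Finset.Icc 1 ell, ∏ i ∈ Finset.Icc 1 (j - 1),
          ((l i : ℚ) - (l j : ℚ) + (j : ℚ) - (i : ℚ))) *
      (∏ i ∈ Finset.Icc 1 ell, (1 : ℚ) / (Nat.factorial (l i + (ell - i)) : ℚ)) :=
  card_isSYT_eq_frobeniusFormula (fun i j => hmono i j)
    (fun i hi => Nat.eq_zero_of_not_pos fun h => by have := (hell i (by omega)).mp h; omega)
    hsum
end

section
/- For a partition λ with at most M parts, the number of semistandard Young tableaux of shape λ with entries in {1,…,M} equals ∏_{1≤i<j≤M} (λ_i − λ_j + j − i)/(j − i). -/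
open Finset

/-- `T` is a semistandard Young tableau of shape `l` with entries in `{1,…,M}`:
rows weakly increase, columns strictly increase (and `T` is `0` outside the diagram). -/
def IsSSYT (l : ℕ → ℕ) (M : ℕ) (T : ℕ × ℕ → ℕ) : Prop :=
  (∀ p ∈ youngCells l, T p ∈ Set.Icc 1 M) ∧
  (∀ i j : ℕ, (i, j) ∈ youngCells l → (i, j + 1) ∈ youngCells l →
      T (i, j) ≤ T (i, j + 1)) ∧
  (∀ i j : ℕ, (i, j) ∈ youngCells l → (i + 1, j) ∈ youngCells l →
      T (i, j) < T (i + 1, j)) ∧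
  (∀ p : ℕ × ℕ, p ∉ youngCells l → T p = 0)

/-! The proof is an induction on `M` (the branching rule). Deleting the entries `M` from a
tableau of shape `λ` leaves a tableau with entries below `M` whose shape `μ` interlaces `λ`
(`λ_{i+1} ≤ μ_i ≤ λ_i`), and every such tableau extends uniquely by filling `λ / μ` with `M`.
The product is the Vandermonde ratio `Δ(x) / Δ(0, …, M-1)` with `x_i = i - λ_{i+1}`, so the
induction step is the identity `(M-1)! · ∑_b Δ(b) = Δ(a)` for integers `a_0 ≤ ⋯ ≤ a_{M-1}`, the
sum running over all `b` with `a_i ≤ b_i < a_{i+1}`. To prove it, replace the monomial columns of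
the Vandermonde matrix by the Bernoulli polynomials (monic, of degree `j`) and subtract consecutive
rows: `B_{j+1}(a_{i+1}) - B_{j+1}(a_i) = (j+1) ∑_{a_i ≤ k < a_{i+1}} k^j`, and the resulting
determinant expands multilinearly into the sum of the `Δ(b)`. -/

namespace Polynomial

theorem natDegree_bernoulli (n : ℕ) : (bernoulli n).natDegree = n := by
  refine natDegree_eq_of_le_of_coeff_ne_zero ?_ (by simp [coeff_bernoulli])
  exact natDegree_le_iff_coeff_eq_zero.mpr fun i hi => by simp [coeff_bernoulli, not_le.mpr hi]

theorem monic_bernoulli (n : ℕ) : (bernoulli n).Monic := by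
  rw [Monic, leadingCoeff, natDegree_bernoulli]
  simp [coeff_bernoulli]

theorem bernoulli_eval_sub_eq_sum_Ico (p : ℕ) {a b : ℤ} (hab : a ≤ b) :
    (bernoulli (p + 1)).eval (b : ℚ) - (bernoulli (p + 1)).eval (a : ℚ) =
      (p + 1) * ∑ k ∈ Ico a b, (k : ℚ) ^ p := by
  induction b, hab using Int.leInduction with
  | base => simp
  | succ b hab ih =>
    rw [← sum_Ico_add_eq_sum_Ico_add_one hab, Int.cast_add, Int.cast_one, add_comm (b : ℚ),
      bernoulli_eval_one_add]
    push_cast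
    linear_combination ih

end Polynomial

namespace Matrix

theorem det_of_sum_eq_sum_piFinset {R m α : Type*} [CommRing R] [Fintype m] [DecidableEq m]
    [DecidableEq α] (A : m → Finset α) (f : α → m → R) :
    (of fun i j => ∑ t ∈ A i, f t j).det =
      ∑ b ∈ Fintype.piFinset A, (of fun i j => f (b i) j).det := by
  convert (detRowAlternating (R := R) (n := m)).toMultilinearMap.map_sum_finset
    (fun _ t => f t) A using 2
  · change det _ = det _
    congr 1
    ext i j
    simp [Finset.sum_apply]
  · rfl

theorem det_eq_det_succ_sub_castSucc {R : Type*} [CommRing R] {n : ℕ}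
    (A : Matrix (Fin (n + 1)) (Fin (n + 1)) R) (hA : ∀ i, A i 0 = 1) :
    A.det = (of fun i j : Fin n => A i.succ j.succ - A i.castSucc j.succ).det := by
  let B : Matrix (Fin (n + 1)) (Fin (n + 1)) R :=
    of fun i j => Fin.cases (A 0 j) (fun k => A k.succ j - A k.castSucc j) i
  have hAB : A.det = B.det :=
    det_eq_of_forall_row_eq_smul_add_pred (fun _ => 1) (fun _ => rfl) fun i j => by simp [B]
  have hB0 : ∀ i : Fin n, B i.succ 0 = 0 := fun i => by simp [B, hA]
  rw [hAB, det_succ_column_zero, Fin.sum_univ_succ,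
    Finset.sum_eq_zero fun i _ => by rw [hB0, mul_zero, zero_mul]]
  simp [B, hA, submatrix]

open Polynomial Nat in
theorem det_vandermonde_eq_factorial_mul_sum {n : ℕ} (a : Fin (n + 1) → ℤ) (ha : Monotone a) :
    (vandermonde fun i => (a i : ℚ)).det = n ! * ∑ b ∈ Fintype.piFinset
      (fun i : Fin n => Ico (a i.castSucc) (a i.succ)), (vandermonde fun i => (b i : ℚ)).det := by
  have hdiff : ∀ i j : Fin n,
      (Polynomial.bernoulli (j + 1)).eval (a i.succ : ℚ) -
          (Polynomial.bernoulli (j + 1)).eval (a i.castSucc : ℚ) =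
        ((j : ℕ) + 1 : ℚ) * ∑ k ∈ Ico (a i.castSucc) (a i.succ), (k : ℚ) ^ (j : ℕ) :=
    fun i j => bernoulli_eval_sub_eq_sum_Ico j (ha (Fin.castSucc_le_succ i))
  have hfact : ∏ j : Fin n, ((j : ℕ) + 1 : ℚ) = n ! := by
    rw [Fin.prod_univ_eq_prod_range (fun j => (j : ℚ) + 1)]
    exact_mod_cast prod_range_add_one_eq_factorial n
  rw [det_eval_matrixOfPolynomials_eq_det_vandermonde _ (fun j => Polynomial.bernoulli j)
      (fun j => natDegree_bernoulli j) (fun j => monic_bernoulli j),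
    det_eq_det_succ_sub_castSucc _ (fun i => by simp)]
  simp only [of_apply, Fin.val_succ, hdiff]
  refine (det_mul_row (fun j : Fin n => ((j : ℕ) + 1 : ℚ))
    (of fun i j => ∑ k ∈ Ico (a i.castSucc) (a i.succ), (k : ℚ) ^ (j : ℕ))).trans ?_
  rw [hfact, det_of_sum_eq_sum_piFinset]
  rfl

open Nat in
theorem det_vandermonde_id_succ (n : ℕ) :
    (vandermonde fun i : Fin (n + 1) => (i : ℚ)).det =
      n ! * (vandermonde fun i : Fin n => (i : ℚ)).det := by
  cases n with
  | zero => simp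
  | succ k =>
    rw [det_vandermonde_id_eq_superFactorial, det_vandermonde_id_eq_superFactorial,
      superFactorial_succ]
    push_cast
    ring

end Matrix

theorem prod_Icc_Icc_pred_eq_prod_Ioi {β : Type*} [CommMonoid β] (M : ℕ) (f : ℕ → ℕ → β) :
    ∏ j ∈ Icc 1 M, ∏ i ∈ Icc 1 (j - 1), f i j = ∏ i : Fin M, ∏ j ∈ Ioi i, f (i + 1) (j + 1) := by
  rw [prod_sigma', prod_sigma']
  refine prod_bij' (fun p hp => ⟨⟨p.2 - 1, by simp at hp; omega⟩, ⟨p.1 - 1, by simp at hp; omega⟩⟩)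
    (fun p _ => ⟨p.2 + 1, p.1 + 1⟩) ?_ ?_ ?_ ?_ ?_
  · rintro ⟨j, i⟩ hp
    simp only [mem_sigma, mem_Icc] at hp
    simp only [mem_sigma, mem_univ, mem_Ioi, Fin.lt_def, true_and]
    omega
  · rintro ⟨i, j⟩ hp
    simp only [mem_sigma, mem_univ, mem_Ioi, Fin.lt_def, true_and] at hp
    simp only [mem_sigma, mem_Icc]
    omega
  · rintro ⟨j, i⟩ hp
    simp only [mem_sigma, mem_Icc] at hp
    simp only [Sigma.mk.injEq, heq_eq_eq]
    omega
  · rintro ⟨i, j⟩ _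
    simp
  · rintro ⟨j, i⟩ hp
    simp only [mem_sigma, mem_Icc] at hp
    congr 1 <;> dsimp only <;> omega

theorem Finset.filter_Icc_eq_Icc_card {p : ℕ → Prop} [DecidablePred p] {L : ℕ}
    (hp : ∀ ⦃i j⦄, 1 ≤ i → i ≤ j → j ≤ L → p j → p i) :
    {j ∈ Icc 1 L | p j} = Icc 1 #{j ∈ Icc 1 L | p j} := by
  set F := {j ∈ Icc 1 L | p j}
  rcases F.eq_empty_or_nonempty with hF | hF
  · rw [hF, card_empty, Icc_eq_empty (by omega)]
  have hmax : F.max' hF ∈ F := F.max'_mem hF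
  have hF_eq : F = Icc 1 (F.max' hF) := by
    ext j
    simp only [F, mem_filter, mem_Icc] at hmax ⊢
    constructor
    · exact fun hj => ⟨hj.1.1, F.le_max' j (by simp [F, hj])⟩
    · exact fun hj => ⟨⟨hj.1, hj.2.trans hmax.1.2⟩, hp hj.1 hj.2 hmax.1.2 hmax.2⟩
  rw [hF_eq, Nat.card_Icc, Nat.add_sub_cancel]

theorem Nat.card_eq_sum_card_fiber {α β : Type*} [Finite α] [DecidableEq β] (s : Finset β)
    (f : α → β) (hf : ∀ a, f a ∈ s) : Nat.card α = ∑ b ∈ s, Nat.card {a // f a = b} := by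
  have := Fintype.ofFinite α
  rw [Nat.card_eq_fintype_card, ← Finset.card_univ,
    Finset.card_eq_sum_card_fiberwise fun a _ => hf a]
  refine sum_congr rfl fun b _ => ?_
  rw [Nat.card_eq_fintype_card, Fintype.card_subtype]

instance (l : ℕ → ℕ) : DecidablePred (· ∈ youngCells l) := fun p =>
  inferInstanceAs (Decidable (1 ≤ p.1 ∧ 1 ≤ p.2 ∧ p.2 ≤ l p.1))

theorem youngCells_mono {l m : ℕ → ℕ} (h : ∀ k, m k ≤ l k) : youngCells m ⊆ youngCells l :=
  fun _ ⟨h1, h2, h3⟩ => ⟨h1, h2, h3.trans (h _)⟩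

theorem finite_youngCells {l : ℕ → ℕ} {M : ℕ} (hl : Antitone l) (hlen : ∀ i, M < i → l i = 0) :
    (youngCells l).Finite := by
  refine ((Set.finite_Icc 1 M).prod (Set.finite_Icc 1 (l 1))).subset fun p ⟨h1, h2, h3⟩ => ?_
  have hM : p.1 ≤ M := by
    by_contra h
    have := hlen p.1 (by omega)
    omega
  exact ⟨⟨h1, hM⟩, h2, h3.trans (hl h1)⟩

namespace IsSSYT

variable {l : ℕ → ℕ} {M : ℕ} {T : ℕ × ℕ → ℕ}

theorem row_weak_of_le (hT : IsSSYT l M T) {i j j' : ℕ} (hj : (i, j) ∈ youngCells l)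
    (hj' : (i, j') ∈ youngCells l) (hjj' : j ≤ j') : T (i, j) ≤ T (i, j') := by
  induction j', hjj' using Nat.le_induction with
  | base => exact le_rfl
  | succ k hjk ih =>
    have hk : (i, k) ∈ youngCells l := ⟨hj.1, hj.2.1.trans hjk, Nat.le_of_succ_le hj'.2.2⟩
    exact (ih hk).trans (hT.2.1 i k hk hj')

theorem row_le_apply (hT : IsSSYT l M T) (hl : Antitone l) {i j : ℕ}
    (h : (i, j) ∈ youngCells l) : i ≤ T (i, j) := by
  induction i with
  | zero => exact Nat.zero_le _
  | succ k ih =>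
    rcases Nat.eq_zero_or_pos k with rfl | hk
    · exact (hT.1 _ h).1
    · have hk' : (k, j) ∈ youngCells l := ⟨hk, h.2.1, h.2.2.trans (hl (Nat.le_succ k))⟩
      exact (ih hk').trans_lt (hT.2.2.1 k j hk' h)

end IsSSYT

theorem finite_ssyt {l : ℕ → ℕ} {M : ℕ} (hl : Antitone l) (hlen : ∀ i, M < i → l i = 0) :
    Finite {T // IsSSYT l M T} := by
  have := (finite_youngCells hl hlen).to_subtype
  refine Finite.of_injective
    (fun T (p : youngCells l) => (⟨T.1 p, Nat.lt_succ_of_le (T.2.1 p p.2).2⟩ : Fin (M + 1))) ?_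
  intro T₁ T₂ h
  ext p
  by_cases hp : p ∈ youngCells l
  · exact congrArg Fin.val (congrFun h ⟨p, hp⟩)
  · rw [T₁.2.2.2.2 p hp, T₂.2.2.2.2 p hp]

theorem card_ssyt_eq_one {l : ℕ → ℕ} {M : ℕ} (hl : ∀ i, 1 ≤ i → l i = 0) :
    Nat.card {T // IsSSYT l M T} = 1 := by
  have hempty : ∀ p, p ∉ youngCells l := fun p ⟨h1, h2, h3⟩ => by rw [hl _ h1] at h3; omega
  refine Nat.card_eq_one_iff_unique.mpr ⟨⟨fun T₁ T₂ => ?_⟩, ⟨0, ?_⟩⟩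
  · ext p
    rw [T₁.2.2.2.2 p (hempty p), T₂.2.2.2.2 p (hempty p)]
  · exact ⟨fun p hp => absurd hp (hempty p), fun _ _ hp => absurd hp (hempty _),
      fun _ _ hp => absurd hp (hempty _), fun _ _ => rfl⟩

def lowerShape (n : ℕ) (l : ℕ → ℕ) (T : ℕ × ℕ → ℕ) (k : ℕ) : ℕ :=
  #{j ∈ Icc 1 (l k) | T (k, j) ≤ n}

noncomputable def fillSkew (l m : ℕ → ℕ) (N : ℕ) (T : ℕ × ℕ → ℕ) : ℕ × ℕ → ℕ :=
  (youngCells m).piecewise T ((youngCells l).indicator fun _ => N)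

section fillSkew_apply

variable {l m : ℕ → ℕ} {N : ℕ} {T : ℕ × ℕ → ℕ} {p : ℕ × ℕ}

theorem fillSkew_of_mem (hm : p ∈ youngCells m) : fillSkew l m N T p = T p :=
  Set.piecewise_eq_of_mem _ _ _ hm

theorem fillSkew_of_notMem (hm : p ∉ youngCells m) (hl : p ∈ youngCells l) :
    fillSkew l m N T p = N := by
  rw [fillSkew, Set.piecewise_eq_of_notMem _ _ _ hm, Set.indicator_of_mem hl]

theorem fillSkew_eq_zero (hm : p ∉ youngCells m) (hl : p ∉ youngCells l) :
    fillSkew l m N T p = 0 := by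
  rw [fillSkew, Set.piecewise_eq_of_notMem _ _ _ hm, Set.indicator_of_notMem hl]

end fillSkew_apply

section lowerShape

variable {l : ℕ → ℕ} {M n : ℕ} {T : ℕ × ℕ → ℕ}

theorem lowerShape_le (k : ℕ) : lowerShape n l T k ≤ l k :=
  (card_filter_le _ _).trans (by rw [Nat.card_Icc, Nat.add_sub_cancel])

theorem IsSSYT.mem_youngCells_lowerShape_iff (hT : IsSSYT l M T) {p : ℕ × ℕ}
    (hp : p ∈ youngCells l) : p ∈ youngCells (lowerShape n l T) ↔ T p ≤ n := by
  obtain ⟨i, j⟩ := p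
  obtain ⟨hi, hj, hjl⟩ := hp
  have hrow : {j ∈ Icc 1 (l i) | T (i, j) ≤ n} = Icc 1 (lowerShape n l T i) :=
    filter_Icc_eq_Icc_card fun a b ha hab hb h =>
      (hT.row_weak_of_le (j := a) (j' := b) ⟨hi, ha, hab.trans hb⟩ ⟨hi, ha.trans hab, hb⟩
        hab).trans h
  have hj_mem := congrArg (j ∈ ·) hrow
  simp only [mem_filter, mem_Icc, eq_iff_iff] at hj_mem
  exact ⟨fun h => (hj_mem.mpr ⟨hj, h.2.2⟩).2, fun h => ⟨hi, hj, (hj_mem.mp ⟨⟨hj, hjl⟩, h⟩).2⟩⟩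

theorem IsSSYT.lowerShape_zero (hT : IsSSYT l M T) : lowerShape n l T 0 = l 0 := by
  have hrow0 : ∀ j, T (0, j) ≤ n := fun j => by
    rw [hT.2.2.2 _ fun h => h.1.not_gt zero_lt_one]
    exact Nat.zero_le n
  rw [lowerShape, filter_true_of_mem fun j _ => hrow0 j, Nat.card_Icc, Nat.add_sub_cancel]

theorem IsSSYT.lowerShape_eq_zero (hT : IsSSYT l M T) (hl : Antitone l) {k : ℕ} (hk : n < k) :
    lowerShape n l T k = 0 := by
  refine card_eq_zero.mpr (filter_eq_empty_iff.mpr fun j hj => ?_)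
  rw [mem_Icc] at hj
  have := hT.row_le_apply hl ⟨by omega, hj.1, hj.2⟩
  omega

theorem IsSSYT.le_lowerShape (hT : IsSSYT l (n + 1) T) (hl : Antitone l) {k : ℕ} (hk : 1 ≤ k) :
    l (k + 1) ≤ lowerShape n l T k := by
  rcases Nat.eq_zero_or_pos (l (k + 1)) with h0 | h0
  · omega
  have hbelow : (k + 1, l (k + 1)) ∈ youngCells l := ⟨by omega, h0, le_rfl⟩
  have hcell : (k, l (k + 1)) ∈ youngCells l := ⟨hk, h0, hl (Nat.le_succ k)⟩
  have hlt := hT.2.2.1 k _ hcell hbelow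
  have hle := (hT.1 _ hbelow).2
  exact ((hT.mem_youngCells_lowerShape_iff hcell).mpr (by omega)).2.2

theorem IsSSYT.indicator_lowerShape (hT : IsSSYT l (n + 1) T) :
    IsSSYT (lowerShape n l T) n ((youngCells (lowerShape n l T)).indicator T) := by
  have hsub := youngCells_mono (lowerShape_le (n := n) (T := T) (l := l))
  refine ⟨fun p hp => ?_, fun i j hp hq => ?_, fun i j hp hq => ?_,
    fun p hp => Set.indicator_of_notMem hp _⟩
  · rw [Set.indicator_of_mem hp]
    exact ⟨(hT.1 p (hsub hp)).1, (hT.mem_youngCells_lowerShape_iff (hsub hp)).mp hp⟩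
  · rw [Set.indicator_of_mem hp, Set.indicator_of_mem hq]
    exact hT.2.1 i j (hsub hp) (hsub hq)
  · rw [Set.indicator_of_mem hp, Set.indicator_of_mem hq]
    exact hT.2.2.1 i j (hsub hp) (hsub hq)

theorem IsSSYT.fillSkew_indicator_lowerShape (hT : IsSSYT l (n + 1) T) :
    fillSkew l (lowerShape n l T) (n + 1) ((youngCells (lowerShape n l T)).indicator T) = T := by
  funext p
  by_cases hm : p ∈ youngCells (lowerShape n l T)
  · rw [fillSkew_of_mem hm, Set.indicator_of_mem hm]
  by_cases hp : p ∈ youngCells l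
  · rw [fillSkew_of_notMem hm hp]
    have := (hT.1 p hp).2
    have := (hT.mem_youngCells_lowerShape_iff hp).not.mp hm
    omega
  · rw [fillSkew_eq_zero hm hp, hT.2.2.2 p hp]

end lowerShape

section fillSkew

variable {l m : ℕ → ℕ} {n : ℕ} {T : ℕ × ℕ → ℕ}

theorem IsSSYT.indicator_fillSkew {N : ℕ} (hT : IsSSYT m n T) :
    (youngCells m).indicator (fillSkew l m N T) = T := by
  funext p
  by_cases hp : p ∈ youngCells m
  · rw [Set.indicator_of_mem hp, fillSkew_of_mem hp]
  · rw [Set.indicator_of_notMem hp, hT.2.2.2 p hp]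

theorem IsSSYT.fillSkew_mem_Icc (hT : IsSSYT m n T) {p : ℕ × ℕ} (hp : p ∈ youngCells l) :
    fillSkew l m (n + 1) T p ∈ Set.Icc 1 (n + 1) := by
  by_cases hm : p ∈ youngCells m
  · rw [fillSkew_of_mem hm]
    exact ⟨(hT.1 p hm).1, (hT.1 p hm).2.trans n.le_succ⟩
  · rw [fillSkew_of_notMem hm hp]
    exact ⟨n.succ_pos, le_rfl⟩

theorem IsSSYT.fillSkew_le_iff (hT : IsSSYT m n T) {p : ℕ × ℕ} (hp : p ∈ youngCells l) :
    fillSkew l m (n + 1) T p ≤ n ↔ p ∈ youngCells m := by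
  by_cases hm : p ∈ youngCells m
  · rw [fillSkew_of_mem hm]
    exact iff_of_true (hT.1 p hm).2 hm
  · rw [fillSkew_of_notMem hm hp]
    exact iff_of_false (by omega) hm

variable (hle : ∀ k, m k ≤ l k) (hstrip : ∀ k, 1 ≤ k → l (k + 1) ≤ m k)
include hle hstrip

theorem isSSYT_fillSkew (hT : IsSSYT m n T) : IsSSYT l (n + 1) (fillSkew l m (n + 1) T) := by
  refine ⟨fun p hp => hT.fillSkew_mem_Icc hp, fun i j hp hq => ?_, fun i j hp hq => ?_,
    fun p hp => ?_⟩
  · by_cases hqm : (i, j + 1) ∈ youngCells m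
    · have hpm : (i, j) ∈ youngCells m := ⟨hp.1, hp.2.1, Nat.le_of_succ_le hqm.2.2⟩
      rw [fillSkew_of_mem hpm, fillSkew_of_mem hqm]
      exact hT.2.1 i j hpm hqm
    · rw [fillSkew_of_notMem hqm hq]
      exact (hT.fillSkew_mem_Icc hp).2
  · have hpm : (i, j) ∈ youngCells m := ⟨hp.1, hp.2.1, hq.2.2.trans (hstrip i hp.1)⟩
    by_cases hqm : (i + 1, j) ∈ youngCells m
    · rw [fillSkew_of_mem hpm, fillSkew_of_mem hqm]
      exact hT.2.2.1 i j hpm hqm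
    · have := (hT.fillSkew_le_iff hp).mpr hpm
      rw [fillSkew_of_notMem hqm hq]
      omega
  · exact fillSkew_eq_zero (fun h => hp (youngCells_mono hle h)) hp

theorem lowerShape_fillSkew (hT : IsSSYT m n T) (h0 : m 0 = l 0) :
    lowerShape n l (fillSkew l m (n + 1) T) = m := by
  funext k
  rcases Nat.eq_zero_or_pos k with rfl | hk
  · rw [(isSSYT_fillSkew hle hstrip hT).lowerShape_zero, h0]
  have hrow : {j ∈ Icc 1 (l k) | fillSkew l m (n + 1) T (k, j) ≤ n} = Icc 1 (m k) := by
    ext j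
    simp only [mem_filter, mem_Icc]
    constructor
    · rintro ⟨⟨h1, h2⟩, h3⟩
      exact ⟨h1, ((hT.fillSkew_le_iff (p := (k, j)) ⟨hk, h1, h2⟩).mp h3).2.2⟩
    · rintro ⟨h1, h2⟩
      exact ⟨⟨h1, h2.trans (hle k)⟩,
        (hT.fillSkew_le_iff (p := (k, j)) ⟨hk, h1, h2.trans (hle k)⟩).mpr ⟨hk, h1, h2⟩⟩
  rw [lowerShape, hrow, Nat.card_Icc, Nat.add_sub_cancel]

end fillSkew

noncomputable def ssytLowerShapeEquiv {l m : ℕ → ℕ} {n : ℕ} (hle : ∀ k, m k ≤ l k)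
    (hstrip : ∀ k, 1 ≤ k → l (k + 1) ≤ m k) (h0 : m 0 = l 0) :
    {T // IsSSYT l (n + 1) T ∧ lowerShape n l T = m} ≃ {T // IsSSYT m n T} where
  toFun T := ⟨(youngCells m).indicator T.1, by
    obtain ⟨T, hT, rfl⟩ := T
    exact hT.indicator_lowerShape⟩
  invFun T := ⟨fillSkew l m (n + 1) T.1, isSSYT_fillSkew hle hstrip T.2,
    lowerShape_fillSkew hle hstrip T.2 h0⟩
  left_inv T := by
    obtain ⟨T, hT, rfl⟩ := T
    exact Subtype.ext hT.fillSkew_indicator_lowerShape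
  right_inv T := Subtype.ext T.2.indicator_fillSkew

/-- Row `0` lies outside every Young diagram; it is set to `top` only to keep the shape
antitone. -/
def shapeOf {n : ℕ} (top : ℕ) (μ : Fin n → ℕ) : ℕ → ℕ
  | 0 => top
  | k + 1 => if h : k < n then μ ⟨k, h⟩ else 0

def interlacingParts (n : ℕ) (l : ℕ → ℕ) : Finset (Fin n → ℕ) :=
  Fintype.piFinset fun i => Icc (l (i + 2)) (l (i + 1))

section shapeOf

variable {n : ℕ} {l : ℕ → ℕ} {μ : Fin n → ℕ}

theorem shapeOf_succ (top : ℕ) (i : Fin n) : shapeOf top μ (i + 1) = μ i := dif_pos i.2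

theorem shapeOf_eq_zero (top : ℕ) {k : ℕ} (hk : n < k) : shapeOf top μ k = 0 := by
  obtain ⟨k, rfl⟩ := Nat.exists_eq_add_one_of_ne_zero (by omega : k ≠ 0)
  exact dif_neg (by omega)

theorem mem_interlacingParts :
    μ ∈ interlacingParts n l ↔ ∀ i : Fin n, l (i + 2) ≤ μ i ∧ μ i ≤ l (i + 1) := by
  simp [interlacingParts]

variable (hμ : μ ∈ interlacingParts n l)
include hμ

theorem shapeOf_le : ∀ k, shapeOf (l 0) μ k ≤ l k
  | 0 => le_rfl
  | k + 1 => by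
    by_cases hk : k < n
    · exact (shapeOf_succ (l 0) ⟨k, hk⟩).trans_le ((mem_interlacingParts.mp hμ ⟨k, hk⟩).2)
    · rw [shapeOf_eq_zero _ (by omega)]
      exact Nat.zero_le _

theorem le_shapeOf (hlen : ∀ i, n + 1 < i → l i = 0) {k : ℕ} (hk : 1 ≤ k) :
    l (k + 1) ≤ shapeOf (l 0) μ k := by
  obtain ⟨k, rfl⟩ := Nat.exists_eq_add_one_of_ne_zero (by omega : k ≠ 0)
  by_cases hkn : k < n
  · exact ((mem_interlacingParts.mp hμ ⟨k, hkn⟩).1).trans_eq (shapeOf_succ (l 0) ⟨k, hkn⟩).symm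
  · rw [hlen _ (by omega)]
    exact Nat.zero_le _

theorem antitone_shapeOf (hl : Antitone l) (hlen : ∀ i, n + 1 < i → l i = 0) :
    Antitone (shapeOf (l 0) μ) := by
  refine antitone_nat_of_succ_le fun k => ?_
  rcases Nat.eq_zero_or_pos k with rfl | hk
  · exact (shapeOf_le hμ 1).trans (hl zero_le_one)
  · exact (shapeOf_le hμ (k + 1)).trans (le_shapeOf hμ hlen hk)

end shapeOf

section branching

variable {l : ℕ → ℕ} {n : ℕ}

theorem IsSSYT.lowerShape_mem_interlacingParts {T : ℕ × ℕ → ℕ} (hT : IsSSYT l (n + 1) T)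
    (hl : Antitone l) : (fun i : Fin n => lowerShape n l T (i + 1)) ∈ interlacingParts n l :=
  mem_interlacingParts.mpr fun i => ⟨hT.le_lowerShape hl (Nat.le_add_left 1 i), lowerShape_le _⟩

theorem IsSSYT.lowerShape_eq_shapeOf_iff {T : ℕ × ℕ → ℕ} (hT : IsSSYT l (n + 1) T)
    (hl : Antitone l) {μ : Fin n → ℕ} :
    lowerShape n l T = shapeOf (l 0) μ ↔ (fun i : Fin n => lowerShape n l T (i + 1)) = μ := by
  constructor
  · intro h
    funext i
    rw [h, shapeOf_succ]
  · rintro rfl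
    funext k
    match k with
    | 0 => exact hT.lowerShape_zero
    | k + 1 =>
      by_cases hk : k < n
      · exact (shapeOf_succ (μ := fun i : Fin n => lowerShape n l T (i + 1)) (l 0) ⟨k, hk⟩).symm
      · rw [hT.lowerShape_eq_zero hl (by omega), shapeOf_eq_zero _ (by omega)]

theorem card_ssyt_succ (hl : Antitone l) (hlen : ∀ i, n + 1 < i → l i = 0) :
    Nat.card {T // IsSSYT l (n + 1) T} =
      ∑ μ ∈ interlacingParts n l, Nat.card {T // IsSSYT (shapeOf (l 0) μ) n T} := by
  have := finite_ssyt hl hlen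
  rw [Nat.card_eq_sum_card_fiber (interlacingParts n l)
    (fun T : {T // IsSSYT l (n + 1) T} => fun i : Fin n => lowerShape n l T.1 (i + 1))
    (fun T => T.2.lowerShape_mem_interlacingParts hl)]
  refine sum_congr rfl fun μ hμ => Nat.card_congr ?_
  refine (Equiv.subtypeSubtypeEquivSubtypeInter (IsSSYT l (n + 1))
    fun T => (fun i : Fin n => lowerShape n l T (i + 1)) = μ).trans
    ((Equiv.subtypeEquivRight fun T => and_congr_right fun (hT : IsSSYT l (n + 1) T) =>
      (hT.lowerShape_eq_shapeOf_iff hl).symm).trans ?_)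
  exact ssytLowerShapeEquiv (shapeOf_le hμ) (fun k => le_shapeOf hμ hlen) rfl

end branching

/-- The shifted parts `λ_{i+1} - i`, negated so that they increase with `i`. -/
def shiftedParts (n : ℕ) (l : ℕ → ℕ) (i : Fin n) : ℤ := i - l (i + 1)

open Matrix in
theorem prod_Icc_Icc_eq_det_vandermonde_div (M : ℕ) (l : ℕ → ℕ) :
    ∏ j ∈ Icc 1 M, ∏ i ∈ Icc 1 (j - 1), ((l i : ℚ) - l j + j - i) / (j - i) =
      (vandermonde fun i => (shiftedParts M l i : ℚ)).det /
        (vandermonde fun i : Fin M => (i : ℚ)).det := by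
  rw [prod_Icc_Icc_pred_eq_prod_Ioi, det_vandermonde, det_vandermonde, ← prod_div_distrib]
  refine prod_congr rfl fun i _ => ?_
  rw [← prod_div_distrib]
  refine prod_congr rfl fun j _ => ?_
  push_cast [shiftedParts]
  ring

open Matrix Nat in
theorem factorial_mul_sum_det_vandermonde_shiftedParts {n : ℕ} {l : ℕ → ℕ} (hl : Antitone l) :
    n ! * ∑ μ ∈ interlacingParts n l,
      (vandermonde fun i => (shiftedParts n (shapeOf (l 0) μ) i : ℚ)).det =
    (vandermonde fun i => (shiftedParts (n + 1) l i : ℚ)).det := by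
  have hmono : Monotone (shiftedParts (n + 1) l) := fun i j hij => by
    have : l (j + 1) ≤ l (i + 1) := hl (Nat.add_le_add_right (Fin.le_def.mp hij) 1)
    simp only [shiftedParts]
    omega
  have hIco : ∀ (i : Fin n) (x : ℤ),
      x ∈ Ico (shiftedParts (n + 1) l i.castSucc) (shiftedParts (n + 1) l i.succ) ↔
        (i : ℤ) - l (i + 1) ≤ x ∧ x < i + 1 - l (i + 2) := fun i x => by
    simp [shiftedParts, add_assoc]
  rw [det_vandermonde_eq_factorial_mul_sum _ hmono]
  congr 1
  refine sum_nbij' (fun μ i => (i : ℤ) - μ i) (fun b i => ((i : ℤ) - b i).toNat) ?_ ?_ ?_ ?_ ?_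
  · intro μ hμ
    refine Fintype.mem_piFinset.mpr fun i => (hIco i _).mpr ?_
    have := (mem_interlacingParts.mp hμ) i
    omega
  · intro b hb
    refine mem_interlacingParts.mpr fun i => ?_
    have := (hIco i _).mp (Fintype.mem_piFinset.mp hb i)
    omega
  · intro μ _
    funext i
    simp
  · intro b hb
    funext i
    have := (hIco i _).mp (Fintype.mem_piFinset.mp hb i)
    simp only
    omega
  · intro μ _
    simp [shiftedParts, shapeOf_succ]

open Matrix in
theorem card_ssyt_mul_det_vandermonde (M : ℕ) {l : ℕ → ℕ} (hl : Antitone l)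
    (hlen : ∀ i, M < i → l i = 0) :
    (Nat.card {T // IsSSYT l M T} : ℚ) * (vandermonde fun i : Fin M => (i : ℚ)).det =
      (vandermonde fun i => (shiftedParts M l i : ℚ)).det := by
  induction M generalizing l with
  | zero => simp [card_ssyt_eq_one hlen]
  | succ n ih =>
    rw [card_ssyt_succ hl hlen, det_vandermonde_id_succ,
      ← factorial_mul_sum_det_vandermonde_shiftedParts hl, Nat.cast_sum, sum_mul, mul_sum]
    refine sum_congr rfl fun μ hμ => ?_
    rw [← ih (antitone_shapeOf hμ hl hlen) fun _ => shapeOf_eq_zero _]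
    ring

/-- the number of semistandard Young tableaux of shape `λ` (at most `M` parts)
with entries in `{1,…,M}` equals `∏_{1≤i<j≤M} (λ_i − λ_j + j − i)/(j − i)`. -/
theorem ssyt_count
    (M : ℕ) (l : ℕ → ℕ) (hmono : ∀ i j, i ≤ j → l j ≤ l i)
    (hlen : ∀ i, M < i → l i = 0) :
    (Nat.card {T : ℕ × ℕ → ℕ // IsSSYT l M T} : ℚ) =
      ∏ j ∈ Finset.Icc 1 M, ∏ i ∈ Finset.Icc 1 (j - 1),
        ((l i : ℚ) - (l j : ℚ) + (j : ℚ) - (i : ℚ)) / ((j : ℚ) - (i : ℚ)) := by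
  have hδ : (Matrix.vandermonde fun i : Fin M => (i : ℚ)).det ≠ 0 :=
    Matrix.det_vandermonde_ne_zero_iff.mpr fun i j h => Fin.ext (by exact_mod_cast h)
  rw [prod_Icc_Icc_eq_det_vandermonde_div, eq_div_iff hδ]
  exact card_ssyt_mul_det_vandermonde M (fun i j => hmono i j) hlen
end

section
/- For every t ∈ ℝ, the Bessel functions of integer order satisfy Σ_{n=1}^∞ n^2 · J_n(t)^2 = t^2/4. -/
/-!
On the unit circle `z = e^{iθ}` the generating function `exp ((t/2)(z - 1/z)) = Σ_{n∈ℤ} J_n(t) zⁿ`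
becomes `e^{i t sin θ}`. Multiplying it by `(t/2)(z + 1/z) = t cos θ` and using the recurrence
`n J_n = (t/2)(J_{n-1} + J_{n+1})` shows that `θ ↦ t cos θ e^{i t sin θ}` has Fourier coefficients
`n J_n(t)`. Parseval's identity then gives `Σ_{n∈ℤ} n² J_n(t)² = (1/2π) ∫ t² cos² θ dθ = t²/2`,
and `J_{-n} = (-1)ⁿ J_n` folds this into twice the sum over `n ≥ 1`.
-/

/-- The Bessel function of the first kind of nonnegative integer order `n`,
`J_n(t) = Σ_{m=0}^∞ (−1)^m (t/2)^{n+2m} / (m!(n+m)!)`. -/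
noncomputable def besselJ (n : ℕ) (t : ℝ) : ℝ :=
  ∑' m : ℕ, (-1 : ℝ) ^ m * (t / 2) ^ (n + 2 * m) /
    ((Nat.factorial m : ℝ) * (Nat.factorial (n + m) : ℝ))

open scoped Nat

noncomputable def besselJTerm (n m : ℕ) (t : ℝ) : ℝ :=
  (-1 : ℝ) ^ m * (t / 2) ^ (n + 2 * m) / ((m ! : ℝ) * ((n + m)! : ℝ))

lemma abs_besselJTerm_le (n m : ℕ) (t : ℝ) :
    |besselJTerm n m t| ≤ |t / 2| ^ n / n ! * (((t / 2) ^ 2) ^ m / m !) := by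
  calc |besselJTerm n m t| = |t / 2| ^ n * ((t / 2) ^ 2) ^ m / (m ! * (n + m)!) := by
        rw [besselJTerm, abs_div]
        simp only [abs_mul, abs_pow, abs_neg, abs_one, one_pow, one_mul, Nat.abs_cast, pow_add,
          pow_mul, sq_abs]
    _ ≤ |t / 2| ^ n * ((t / 2) ^ 2) ^ m / (m ! * n !) := by gcongr; omega
    _ = _ := by ring

lemma summable_besselJTerm (n : ℕ) (t : ℝ) : Summable fun m => besselJTerm n m t :=
  .of_norm_bounded ((Real.summable_pow_div_factorial _).mul_left _) (abs_besselJTerm_le n · t)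

lemma hasSum_besselJTerm (n : ℕ) (t : ℝ) : HasSum (fun m => besselJTerm n m t) (besselJ n t) :=
  (summable_besselJTerm n t).hasSum

lemma abs_besselJ_le (n : ℕ) (t : ℝ) :
    |besselJ n t| ≤ |t / 2| ^ n / n ! * Real.exp ((t / 2) ^ 2) := by
  have hexp := (NormedSpace.expSeries_div_hasSum_exp ((t / 2) ^ 2)).mul_left (|t / 2| ^ n / n !)
  rw [← Real.exp_eq_exp_ℝ] at hexp
  exact (hasSum_besselJTerm n t).norm_le_of_bounded hexp (abs_besselJTerm_le n · t)

lemma summable_abs_besselJ (t : ℝ) : Summable fun n => |besselJ n t| :=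
  .of_nonneg_of_le (fun _ => abs_nonneg _) (abs_besselJ_le · t)
    ((Real.summable_pow_div_factorial _).mul_right _)

lemma mul_besselJ_succ (n : ℕ) (t : ℝ) :
    ((n : ℝ) + 1) * besselJ (n + 1) t = t / 2 * (besselJ n t + besselJ (n + 2) t) := by
  have hterm_zero : ((n : ℝ) + 1) * besselJTerm (n + 1) 0 t = t / 2 * besselJTerm n 0 t := by
    simp only [besselJTerm, mul_zero, add_zero, Nat.factorial_succ]
    push_cast
    field_simp
    ring
  have hterm_succ (m : ℕ) : ((n : ℝ) + 1) * besselJTerm (n + 1) (m + 1) t =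
      t / 2 * (besselJTerm n (m + 1) t + besselJTerm (n + 2) m t) := by
    simp only [besselJTerm, show n + 1 + (m + 1) = n + m + 1 + 1 by omega,
      show n + (m + 1) = n + m + 1 by omega, show n + 2 + m = n + m + 1 + 1 by omega,
      Nat.factorial_succ]
    push_cast
    field_simp
    ring
  rw [← (hasSum_besselJTerm (n + 1) t).tsum_eq, ← (hasSum_besselJTerm n t).tsum_eq,
    ← (hasSum_besselJTerm (n + 2) t).tsum_eq, (summable_besselJTerm (n + 1) t).tsum_eq_zero_add,
    (summable_besselJTerm n t).tsum_eq_zero_add, mul_add, ← tsum_mul_left, hterm_zero,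
    tsum_congr hterm_succ, tsum_mul_left,
    ((summable_nat_add_iff 1).mpr (summable_besselJTerm n t)).tsum_add
      (summable_besselJTerm (n + 2) t)]
  ring

noncomputable def besselJInt : ℤ → ℝ → ℝ
  | (n : ℕ), t => besselJ n t
  | .negSucc n, t => (-1) ^ (n + 1) * besselJ (n + 1) t

lemma besselJInt_natCast (n : ℕ) (t : ℝ) : besselJInt n t = besselJ n t := rfl

lemma besselJInt_neg_natCast (n : ℕ) (t : ℝ) :
    besselJInt (-n) t = (-1) ^ n * besselJ n t := by
  cases n with
  | zero => simpa using besselJInt_natCast 0 t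
  | succ n => rfl

lemma mul_besselJInt (n : ℤ) (t : ℝ) :
    n * besselJInt n t = t / 2 * (besselJInt (n - 1) t + besselJInt (n + 1) t) := by
  have hJ1 : besselJInt (-1) t = -besselJInt 1 t :=
    (besselJInt_neg_natCast 1 t).trans (by rw [pow_one, neg_one_mul]; rfl)
  obtain ⟨k, rfl | rfl⟩ := Int.eq_nat_or_neg n
  · cases k with
    | zero => simp [hJ1]
    | succ j =>
      rw [show ((j + 1 : ℕ) : ℤ) - 1 = j by push_cast; ring,
        show ((j + 1 : ℕ) : ℤ) + 1 = (j + 2 : ℕ) by push_cast; ring]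
      push_cast
      exact mul_besselJ_succ j t
  · cases k with
    | zero => simp [hJ1]
    | succ j =>
      rw [show -((j + 1 : ℕ) : ℤ) - 1 = -(j + 2 : ℕ) by push_cast; ring,
        show -((j + 1 : ℕ) : ℤ) + 1 = -j by push_cast; ring, besselJInt_neg_natCast,
        besselJInt_neg_natCast, besselJInt_neg_natCast]
      push_cast
      linear_combination (-1) ^ j * mul_besselJ_succ j t

lemma summable_abs_besselJInt (t : ℝ) : Summable fun n : ℤ => |besselJInt n t| :=
  .of_nat_of_neg (summable_abs_besselJ t)
    (by simpa [besselJInt_neg_natCast, abs_mul] using summable_abs_besselJ t)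

lemma summable_abs_mul_besselJInt (t : ℝ) : Summable fun n : ℤ => |n * besselJInt n t| := by
  have hprev := (summable_abs_besselJInt t).comp_injective (sub_left_injective (b := (1 : ℤ)))
  have hnext := (summable_abs_besselJInt t).comp_injective (add_left_injective (1 : ℤ))
  simp_rw [mul_besselJInt, abs_mul]
  exact (Summable.of_nonneg_of_le (fun _ => abs_nonneg _) (fun n => abs_add_le _ _)
    (hprev.add hnext)).mul_left _

def subMinEquiv : ℕ × ℕ ≃ ℤ × ℕ where
  toFun p := ((p.1 : ℤ) - p.2, min p.1 p.2)
  invFun q := (q.1.toNat + q.2, (-q.1).toNat + q.2)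
  left_inv p := by ext <;> dsimp <;> omega
  right_inv q := by ext <;> dsimp <;> omega

lemma hasSum_exp_mul_exp (x y : ℂ) :
    HasSum (fun p : ℕ × ℕ => x ^ p.1 / p.1 ! * (y ^ p.2 / p.2 !))
      (Complex.exp x * Complex.exp y) := by
  have hexp (w : ℂ) : HasSum (fun n : ℕ => w ^ n / n !) (Complex.exp w) := by
    rw [Complex.exp_eq_exp_ℂ]
    exact NormedSpace.expSeries_div_hasSum_exp w
  have hnorm (w : ℂ) : Summable fun n : ℕ => ‖w ^ n / (n ! : ℂ)‖ :=
    NormedSpace.norm_expSeries_div_summable (𝔸 := ℂ) w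
  have hprod := summable_mul_of_summable_norm (hnorm x) (hnorm y)
  have h := (hexp x).mul (hexp y) hprod
  exact h

theorem hasSum_besselJInt_mul_zpow (t : ℝ) {z : ℂ} (hz : z ≠ 0) :
    HasSum (fun n : ℤ => (besselJInt n t : ℂ) * z ^ n) (Complex.exp (t / 2 * (z - z⁻¹))) := by
  set x : ℂ := t / 2 * z
  set y : ℂ := -(t / 2 * z⁻¹)
  rw [show (t : ℂ) / 2 * (z - z⁻¹) = x + y by simp only [x, y]; ring, Complex.exp_add]
  -- The term indexed by `(a, b)` carries the power `z ^ (a - b)`: sum over the fibres of `a - b`.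
  refine (subMinEquiv.symm.hasSum_iff.mpr (hasSum_exp_mul_exp x y)).prod_fiberwise fun n => ?_
  cases n with
  | ofNat k =>
    have hterm (m : ℕ) :
        x ^ (k + m) / ((k + m)! : ℂ) * (y ^ m / (m ! : ℂ)) = besselJTerm k m t * z ^ k := by
      simp only [x, y]
      rw [neg_pow]
      simp only [besselJTerm, mul_pow, inv_pow, pow_add]
      push_cast
      field_simp
      ring
    simpa [subMinEquiv, hterm, besselJInt_natCast] using
      (Complex.hasSum_ofReal.mpr (hasSum_besselJTerm k t)).mul_right (z ^ k)
  | negSucc k =>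
    have hterm (m : ℕ) : x ^ m / (m ! : ℂ) * (y ^ (k + 1 + m) / ((k + 1 + m)! : ℂ)) =
        (-1) ^ (k + 1) * besselJTerm (k + 1) m t * (z ^ (k + 1))⁻¹ := by
      simp only [x, y]
      rw [neg_pow]
      simp only [besselJTerm, mul_pow, inv_pow, pow_add]
      push_cast
      field_simp
      ring
    simpa [subMinEquiv, hterm, besselJInt] using
      ((Complex.hasSum_ofReal.mpr (hasSum_besselJTerm (k + 1) t)).mul_left
        ((-1) ^ (k + 1))).mul_right (z ^ (k + 1))⁻¹

theorem hasSum_mul_besselJInt_mul_zpow (t : ℝ) {z : ℂ} (hz : z ≠ 0) :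
    HasSum (fun n : ℤ => (n * besselJInt n t : ℂ) * z ^ n)
      (t / 2 * (z + z⁻¹) * Complex.exp (t / 2 * (z - z⁻¹))) := by
  set E := Complex.exp (t / 2 * (z - z⁻¹))
  have hJ : HasSum (fun n : ℤ => (besselJInt n t : ℂ) * z ^ n) E :=
    hasSum_besselJInt_mul_zpow t hz
  have hprev : HasSum (fun n : ℤ => (besselJInt (n - 1) t : ℂ) * z ^ n) (z * E) := by
    refine (Equiv.addRight (1 : ℤ)).hasSum_iff.mp ((hJ.mul_left z).congr_fun fun n => ?_)
    simp only [Function.comp_apply, Equiv.coe_addRight, add_sub_cancel_right, zpow_add_one₀ hz]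
    ring
  have hnext : HasSum (fun n : ℤ => (besselJInt (n + 1) t : ℂ) * z ^ n) (z⁻¹ * E) := by
    refine (Equiv.subRight (1 : ℤ)).hasSum_iff.mp ((hJ.mul_left z⁻¹).congr_fun fun n => ?_)
    simp only [Function.comp_apply, Equiv.subRight_apply, sub_add_cancel, zpow_sub_one₀ hz]
    ring
  rw [show (t : ℂ) / 2 * (z + z⁻¹) * E = t / 2 * (z * E + z⁻¹ * E) by ring]
  refine ((hprev.add hnext).mul_left _).congr_fun fun n => ?_
  rw [← Complex.ofReal_intCast, ← Complex.ofReal_mul, mul_besselJInt]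
  push_cast
  ring

section Fourier

open AddCircle MeasureTheory

variable {T : ℝ} [Fact (0 < T)]

lemma fourierCoeff_tsum_smul_fourier {c : ℤ → ℂ} (hc : Summable fun n => ‖c n‖) (m : ℤ) :
    fourierCoeff (⇑(∑' n, c n • fourier n : C(AddCircle T, ℂ))) m = c m := by
  have hs : Summable fun n => c n • (fourier n : C(AddCircle T, ℂ)) :=
    .of_norm (by simpa only [norm_smul, fourier_norm, mul_one] using hc)
  let L : C(AddCircle T, ℂ) →L[ℂ] ℂ :=
    (innerSL ℂ (fourierLp 2 m)).comp (ContinuousMap.toLp 2 haarAddCircle ℂ)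
  have hL (f : C(AddCircle T, ℂ)) : L f = fourierCoeff f m := by
    rw [← fourierCoeff_toLp, ← fourierBasis_repr, HilbertBasis.repr_apply_apply,
      coe_fourierBasis]
    rfl
  have hL_fourier (n : ℤ) : L (fourier n) = if n = m then 1 else 0 :=
    (orthonormal_iff_ite.mp orthonormal_fourier m n).trans (if_congr eq_comm rfl rfl)
  simp_rw [← hL, L.map_tsum hs, map_smul, hL_fourier, smul_eq_mul, mul_ite, mul_one, mul_zero]
  exact tsum_ite_eq m c

lemma hasSum_sq_norm_fourierCoeff (f : C(AddCircle T, ℂ)) :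
    HasSum (fun n => ‖fourierCoeff f n‖ ^ 2) (∫ x, ‖f x‖ ^ 2 ∂haarAddCircle) := by
  have h := hasSum_sq_fourierCoeff (ContinuousMap.toLp (E := ℂ) 2 haarAddCircle ℂ f)
  simp_rw [fourierCoeff_toLp] at h
  convert h using 1
  refine integral_congr_ae ?_
  filter_upwards [ContinuousMap.coeFn_toLp (p := 2) (μ := haarAddCircle) (𝕜 := ℂ) f] with x hx
  rw [hx]

end Fourier

section BesselFourierSeries

open AddCircle Real MeasureTheory

local instance : Fact (0 < 2 * π) := ⟨two_pi_pos⟩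

noncomputable def besselFourierSeries (t : ℝ) : C(AddCircle (2 * π), ℂ) :=
  ∑' n : ℤ, ((n * besselJInt n t : ℝ) : ℂ) • fourier n

lemma fourierCoeff_besselFourierSeries (t : ℝ) (n : ℤ) :
    fourierCoeff (besselFourierSeries t) n = ((n * besselJInt n t : ℝ) : ℂ) := by
  rw [besselFourierSeries, fourierCoeff_tsum_smul_fourier]
  simpa only [Complex.norm_real, Real.norm_eq_abs] using summable_abs_mul_besselJInt t

lemma fourier_coe_apply_eq_zpow (n : ℤ) (θ : ℝ) :
    fourier n (θ : AddCircle (2 * π)) = Complex.exp (θ * Complex.I) ^ n := by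
  rw [fourier_coe_apply, ← Complex.exp_int_mul]
  congr 1
  push_cast
  field_simp

lemma besselFourierSeries_coe_apply (t θ : ℝ) :
    besselFourierSeries t θ =
      ((t * cos θ : ℝ) : ℂ) * Complex.exp ((t * sin θ : ℝ) * Complex.I) := by
  have hs : Summable fun n : ℤ =>
      ((n * besselJInt n t : ℝ) : ℂ) • (fourier n : C(AddCircle (2 * π), ℂ)) :=
    .of_norm (by simpa only [norm_smul, fourier_norm, mul_one, Complex.norm_real,
      Real.norm_eq_abs] using summable_abs_mul_besselJInt t)
  have heval := hs.hasSum.mapL (ContinuousMap.evalCLM ℂ (θ : AddCircle (2 * π)))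
  have hgen := hasSum_mul_besselJInt_mul_zpow t (Complex.exp_ne_zero (θ * Complex.I))
  have hz : Complex.exp (θ * Complex.I) = cos θ + sin θ * Complex.I := by
    rw [Complex.exp_mul_I, Complex.ofReal_cos, Complex.ofReal_sin]
  have hz_inv : (Complex.exp (θ * Complex.I))⁻¹ = cos θ - sin θ * Complex.I := by
    rw [← Complex.exp_neg, ← neg_mul, Complex.exp_mul_I, Complex.cos_neg, Complex.sin_neg,
      Complex.ofReal_cos, Complex.ofReal_sin]
    ring
  refine heval.unique (hgen.congr_fun fun n => ?_) |>.trans ?_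
  · simp only [ContinuousMap.evalCLM_apply, ContinuousMap.smul_apply, smul_eq_mul,
      fourier_coe_apply_eq_zpow]
    push_cast
    ring
  · rw [hz_inv, hz]
    push_cast
    congr 1 <;> ring_nf

lemma norm_besselFourierSeries_coe_apply_sq (t θ : ℝ) :
    ‖besselFourierSeries t θ‖ ^ 2 = t ^ 2 * cos θ ^ 2 := by
  rw [besselFourierSeries_coe_apply, norm_mul, Complex.norm_exp_ofReal_mul_I, mul_one,
    Complex.norm_real, Real.norm_eq_abs, sq_abs, mul_pow]

lemma integral_norm_besselFourierSeries_sq (t : ℝ) :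
    ∫ x, ‖besselFourierSeries t x‖ ^ 2 ∂haarAddCircle = t ^ 2 / 2 := by
  rw [integral_haarAddCircle, ← AddCircle.intervalIntegral_preimage (2 * π) 0]
  simp_rw [norm_besselFourierSeries_coe_apply_sq]
  rw [intervalIntegral.integral_const_mul, integral_cos_sq, zero_add, sin_two_pi, sin_zero,
    smul_eq_mul]
  field_simp
  ring

lemma hasSum_sq_mul_besselJInt (t : ℝ) :
    HasSum (fun n : ℤ => (n * besselJInt n t) ^ 2) (t ^ 2 / 2) := by
  have h := hasSum_sq_norm_fourierCoeff (besselFourierSeries t)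
  simpa only [fourierCoeff_besselFourierSeries, Complex.norm_real, Real.norm_eq_abs, sq_abs,
    integral_norm_besselFourierSeries_sq] using h

end BesselFourierSeries

/-- `Σ_{n=1}^∞ n² J_n(t)² = t²/4` (the `n = 0` term vanishes, so the sum
may be taken over all `n ∈ ℕ`). -/
theorem bessel_sum_sq_weighted (t : ℝ) :
    ∑' n : ℕ, (n : ℝ) ^ 2 * (besselJ n t) ^ 2 = t ^ 2 / 4 := by
  have hpair (n : ℕ) :
      (((n : ℤ) : ℝ) * besselJInt n t) ^ 2 + (((-n : ℤ) : ℝ) * besselJInt (-n) t) ^ 2 =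
        2 * ((n : ℝ) ^ 2 * besselJ n t ^ 2) := by
    have hsign : ((-1 : ℝ) ^ n) ^ 2 = 1 := by rw [← pow_mul, pow_mul', neg_one_sq, one_pow]
    rw [besselJInt_neg_natCast, besselJInt_natCast]
    push_cast
    linear_combination ((n : ℝ) ^ 2 * besselJ n t ^ 2) * hsign
  have h := (hasSum_sq_mul_besselJInt t).nat_add_neg
  simp only [hpair, Int.cast_zero, zero_mul] at h
  rw [show t ^ 2 / 2 + 0 ^ 2 = 2 * (t ^ 2 / 4) by ring, hasSum_mul_left_iff two_ne_zero] at h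
  exact h.tsum_eq
end

section
/- Let 1 ≤ j ≤ M and let x ∈ ℕ^M satisfy x_i = i − 1 for i < j and j ≤ x_j < x_{j+1} < … < x_M. Define x' by x'_i = x_i for i < j and x'_i = x_i − 1 for i ≥ j, and let Δ_M(x) = ∏_{1≤k<l≤M}(x_l − x_k). Then Δ_M(x)/Δ_M(x') = ∏_{k=j}^M x_k/(x_k − (j−1)) ≤ C(M, j−1), and ∏_{i=j}^M 1/x_i² ≤ ((j−1)!/M!)². -/
open Finset

private lemma aux_shift_prod (n : ℕ) (t : ℚ) :
    (t - n) * ∏ k ∈ Finset.Icc 1 n, (t - k + 1) = t * ∏ k ∈ Finset.Icc 1 n, (t - k) := by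
  induction n with
  | zero => simp
  | succ n ih =>
      rw [Finset.prod_Icc_succ_top (by omega), Finset.prod_Icc_succ_top (by omega)]
      push_cast
      push_cast at ih
      linear_combination (t - ((n : ℚ) + 1)) * ih

/-- Lemma 3.3 estimates: for a strictly increasing configuration
`x ∈ ℕ^M` with `x_i = i − 1` for `i < j` and `x_j ≥ j` (the first hole at `j − 1`),
letting `x'_i = x_i` for `i < j` and `x'_i = x_i − 1` for `i ≥ j`, with
`Δ_M(x) = ∏_{1≤k<l≤M}(x_l − x_k)`:
`Δ_M(x)/Δ_M(x') = ∏_{k=j}^M x_k/(x_k − (j−1)) ≤ C(M, j−1)` and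
`∏_{i=j}^M 1/x_i² ≤ ((j−1)!/M!)²`. -/
theorem hole_shift_vandermonde_estimates
    (M j : ℕ) (hj1 : 1 ≤ j) (hjM : j ≤ M) (x : ℕ → ℕ)
    (hlow : ∀ i, 1 ≤ i → i < j → x i = i - 1)
    (hxj : j ≤ x j)
    (hinc : ∀ i, j ≤ i → i < M → x i < x (i + 1)) :
    ((∏ l ∈ Finset.Icc 1 M, ∏ k ∈ Finset.Icc 1 (l - 1), ((x l : ℚ) - (x k : ℚ))) /
        (∏ l ∈ Finset.Icc 1 M, ∏ k ∈ Finset.Icc 1 (l - 1),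
          ((if l < j then (x l : ℚ) else (x l : ℚ) - 1) -
            (if k < j then (x k : ℚ) else (x k : ℚ) - 1))) =
      ∏ k ∈ Finset.Icc j M, (x k : ℚ) / ((x k : ℚ) - ((j - 1 : ℕ) : ℚ))) ∧
    (∏ k ∈ Finset.Icc j M, (x k : ℚ) / ((x k : ℚ) - ((j - 1 : ℕ) : ℚ)) ≤
      (M.choose (j - 1) : ℚ)) ∧
    (∏ i ∈ Finset.Icc j M, (1 : ℚ) / (x i : ℚ) ^ 2 ≤
      ((Nat.factorial (j - 1) : ℚ) / (Nat.factorial M : ℚ)) ^ 2) := by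
  -- strict monotonicity on [j, M]
  have hmono : ∀ l, l ≤ M → ∀ k, j ≤ k → k < l → x k < x l := by
    intro l hlM
    induction l with
    | zero => intro k _ hk; omega
    | succ n ih =>
        intro k hjk hk
        rcases Nat.lt_or_ge k n with h | h
        · exact lt_trans (ih (by omega) k hjk h) (hinc n (by omega) (by omega))
        · have : k = n := by omega
          subst this
          exact hinc k hjk (by omega)
  -- lower bound x i ≥ i on [j, M]
  have hxi : ∀ i, j ≤ i → i ≤ M → i ≤ x i := by
    intro i hji
    induction i, hji using Nat.le_induction with
    | base => intro _; exact hxj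
    | succ n hn ih =>
        intro hM
        have h1 := hinc n hn (by omega)
        have h2 := ih (by omega)
        omega
  -- cast of hlow
  have hcast : ∀ k, 1 ≤ k → k < j → (x k : ℚ) = (k : ℚ) - 1 := by
    intro k h1 h2
    rw [hlow k h1 h2, Nat.cast_sub h1, Nat.cast_one]
  -- splitting products at j
  have hsplit : ∀ (n : ℕ), j - 1 ≤ n → ∀ f : ℕ → ℚ,
      (∏ k ∈ Finset.Icc 1 n, f k)
        = (∏ k ∈ Finset.Icc 1 (j - 1), f k) * ∏ k ∈ Finset.Icc j n, f k := by
    intro n hn f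
    rw [← Finset.prod_filter_mul_prod_filter_not (Finset.Icc 1 n) (· < j) f]
    have e1 : Finset.filter (· < j) (Finset.Icc 1 n) = Finset.Icc 1 (j - 1) := by
      ext a; simp only [Finset.mem_filter, Finset.mem_Icc]; omega
    have e2 : Finset.filter (fun a => ¬ a < j) (Finset.Icc 1 n) = Finset.Icc j n := by
      ext a; simp only [Finset.mem_filter, Finset.mem_Icc]; omega
    rw [e1, e2]
  -- basic nat product facts
  have hfactprod : ∀ n : ℕ, (∏ k ∈ Finset.Icc 1 n, k) = n.factorial := by
    intro n
    rw [← Finset.Ico_add_one_right_eq_Icc]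
    exact Finset.prod_Ico_id_eq_factorial n
  have hfact1 : ((j - 1).factorial * ∏ k ∈ Finset.Icc j M, k) = M.factorial := by
    have h2 : (∏ k ∈ Finset.Ioc 0 (j - 1), k) * ∏ k ∈ Finset.Ioc (j - 1) M, k
        = ∏ k ∈ Finset.Ioc 0 M, k := Finset.prod_Ioc_consecutive _ (by omega) (by omega)
    have e1 : Finset.Ioc 0 (j - 1) = Finset.Icc 1 (j - 1) := by ext a; simp; omega
    have e2 : Finset.Ioc (j - 1) M = Finset.Icc j M := by ext a; simp; omega
    have e3 : Finset.Ioc 0 M = Finset.Icc 1 M := by ext a; simp; omega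
    rw [e1, e2, e3, hfactprod, hfactprod] at h2
    exact h2
  have hfact2 : (∏ k ∈ Finset.Icc j M, (k - (j - 1))) = (M - (j - 1)).factorial := by
    have h : (∏ k ∈ Finset.Icc j M, (k - (j - 1))) = ∏ k ∈ Finset.Icc 1 (M - (j - 1)), k := by
      apply Finset.prod_nbij' (fun k => k - (j - 1)) (fun k => k + (j - 1)) <;>
        intro a ha <;> simp only [Finset.mem_Icc] at ha ⊢ <;> omega
    rw [h, hfactprod]
  -- the model product equals the binomial coefficient
  have hchoose : (∏ k ∈ Finset.Icc j M, (k : ℚ) / ((k : ℚ) - ((j - 1 : ℕ) : ℚ)))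
      = (M.choose (j - 1) : ℚ) := by
    rw [Finset.prod_div_distrib]
    have hden : (∏ k ∈ Finset.Icc j M, ((k : ℚ) - ((j - 1 : ℕ) : ℚ)))
        = ((∏ k ∈ Finset.Icc j M, (k - (j - 1)) : ℕ) : ℚ) := by
      rw [Nat.cast_prod]
      apply Finset.prod_congr rfl
      intro k hk
      simp only [Finset.mem_Icc] at hk
      rw [Nat.cast_sub (by omega : j - 1 ≤ k)]
    have hnum : (∏ k ∈ Finset.Icc j M, (k : ℚ))
        = ((∏ k ∈ Finset.Icc j M, k : ℕ) : ℚ) := by rw [Nat.cast_prod]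
    rw [hnum, hden, hfact2]
    have hkey : (∏ k ∈ Finset.Icc j M, k) = M.choose (j - 1) * (M - (j - 1)).factorial := by
      have h := Nat.choose_mul_factorial_mul_factorial (show j - 1 ≤ M by omega)
      have hpos : 0 < (j - 1).factorial := Nat.factorial_pos _
      have h2 : (j - 1).factorial * (∏ k ∈ Finset.Icc j M, k)
          = (j - 1).factorial * (M.choose (j - 1) * (M - (j - 1)).factorial) := by
        rw [hfact1, ← h]; ring
      exact Nat.eq_of_mul_eq_mul_left hpos h2
    rw [hkey]
    have hfpos : (0 : ℚ) < ((M - (j - 1)).factorial : ℚ) := by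
      exact_mod_cast Nat.factorial_pos _
    push_cast
    field_simp
  -- Part 2
  have part2 : (∏ k ∈ Finset.Icc j M, (x k : ℚ) / ((x k : ℚ) - ((j - 1 : ℕ) : ℚ)))
      ≤ (M.choose (j - 1) : ℚ) := by
    rw [← hchoose]
    apply Finset.prod_le_prod
    · intro k hk
      simp only [Finset.mem_Icc] at hk
      have h1 : (k : ℚ) ≤ (x k : ℚ) := by exact_mod_cast hxi k hk.1 hk.2
      have h2 : ((j - 1 : ℕ) : ℚ) < (k : ℚ) := by exact_mod_cast (by omega : j - 1 < k)
      apply div_nonneg (by positivity)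
      linarith
    · intro k hk
      simp only [Finset.mem_Icc] at hk
      have h1 : (k : ℚ) ≤ (x k : ℚ) := by exact_mod_cast hxi k hk.1 hk.2
      have h2 : ((j - 1 : ℕ) : ℚ) < (k : ℚ) := by exact_mod_cast (by omega : j - 1 < k)
      have h3 : (0 : ℚ) ≤ ((j - 1 : ℕ) : ℚ) := by positivity
      rw [div_le_div_iff₀ (by linarith) (by linarith)]
      nlinarith
  -- Part 3
  have part3 : (∏ i ∈ Finset.Icc j M, (1 : ℚ) / (x i : ℚ) ^ 2)
      ≤ ((Nat.factorial (j - 1) : ℚ) / (Nat.factorial M : ℚ)) ^ 2 := by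
    have hstep : (∏ i ∈ Finset.Icc j M, (1 : ℚ) / (x i : ℚ) ^ 2)
        ≤ ∏ i ∈ Finset.Icc j M, (1 : ℚ) / (i : ℚ) ^ 2 := by
      apply Finset.prod_le_prod
      · intro i _; positivity
      · intro i hi
        simp only [Finset.mem_Icc] at hi
        have h1 : (i : ℚ) ≤ (x i : ℚ) := by exact_mod_cast hxi i hi.1 hi.2
        have h2 : (0 : ℚ) < (i : ℚ) := by exact_mod_cast (by omega : 0 < i)
        apply one_div_le_one_div_of_le (by positivity)
        nlinarith
    have heq : (∏ i ∈ Finset.Icc j M, (1 : ℚ) / (i : ℚ) ^ 2)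
        = ((Nat.factorial (j - 1) : ℚ) / (Nat.factorial M : ℚ)) ^ 2 := by
      have h1 : (∏ i ∈ Finset.Icc j M, (1 : ℚ) / (i : ℚ) ^ 2)
          = 1 / (∏ i ∈ Finset.Icc j M, (i : ℚ)) ^ 2 := by
        rw [Finset.prod_div_distrib, Finset.prod_pow, Finset.prod_const_one]
      have h2 : ((j - 1).factorial : ℚ) * (∏ i ∈ Finset.Icc j M, (i : ℚ)) = (M.factorial : ℚ) := by
        rw [← Nat.cast_prod]
        exact_mod_cast congrArg (fun n : ℕ => (n : ℚ)) hfact1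
      have h3 : (0 : ℚ) < ((j - 1).factorial : ℚ) := by exact_mod_cast Nat.factorial_pos _
      have h4 : (0 : ℚ) < (M.factorial : ℚ) := by exact_mod_cast Nat.factorial_pos _
      have h5 : (0 : ℚ) < ∏ i ∈ Finset.Icc j M, (i : ℚ) := by
        apply Finset.prod_pos
        intro i hi
        simp only [Finset.mem_Icc] at hi
        exact_mod_cast (by omega : 0 < i)
      rw [h1]
      field_simp
      nlinarith [h2]
    exact le_of_le_of_eq hstep heq
  -- Part 1
  set c : ℚ := ((j - 1 : ℕ) : ℚ) with hc
  have hcge : (0 : ℚ) ≤ c := by rw [hc]; positivity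
  have hclt : c < (j : ℚ) := by
    rw [hc]; exact_mod_cast (by omega : j - 1 < j)
  set a : ℕ → ℚ := fun l => ∏ k ∈ Finset.Icc 1 (l - 1), ((x l : ℚ) - (x k : ℚ)) with ha
  set b : ℕ → ℚ := fun l => ∏ k ∈ Finset.Icc 1 (l - 1),
      ((if l < j then (x l : ℚ) else (x l : ℚ) - 1) -
        (if k < j then (x k : ℚ) else (x k : ℚ) - 1)) with hb
  have hlt : ∀ l, l < j → a l = b l := by
    intro l hl
    apply Finset.prod_congr rfl
    intro k hk
    simp only [Finset.mem_Icc] at hk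
    rw [if_pos hl, if_pos (by omega)]
  have hge : ∀ l, j ≤ l → l ≤ M → ((x l : ℚ) - c) * a l = (x l : ℚ) * b l := by
    intro l hjl hlM
    have hal : a l = (∏ k ∈ Finset.Icc 1 (j - 1), ((x l : ℚ) - (k : ℚ) + 1)) *
        ∏ k ∈ Finset.Icc j (l - 1), ((x l : ℚ) - (x k : ℚ)) := by
      rw [ha]
      simp only
      rw [hsplit (l - 1) (by omega)]
      congr 1
      apply Finset.prod_congr rfl
      intro k hk
      simp only [Finset.mem_Icc] at hk
      rw [hcast k hk.1 (by omega)]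
      ring
    have hbl : b l = (∏ k ∈ Finset.Icc 1 (j - 1), ((x l : ℚ) - (k : ℚ))) *
        ∏ k ∈ Finset.Icc j (l - 1), ((x l : ℚ) - (x k : ℚ)) := by
      rw [hb]
      simp only
      rw [hsplit (l - 1) (by omega)]
      congr 1
      · apply Finset.prod_congr rfl
        intro k hk
        simp only [Finset.mem_Icc] at hk
        rw [if_neg (by omega), if_pos (by omega), hcast k hk.1 (by omega)]
        ring
      · apply Finset.prod_congr rfl
        intro k hk
        simp only [Finset.mem_Icc] at hk
        rw [if_neg (by omega), if_neg (by omega)]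
        ring
    have key := aux_shift_prod (j - 1) (x l : ℚ)
    rw [hal, hbl, ← mul_assoc, ← mul_assoc, hc, key]
  have hbpos : ∀ l, 1 ≤ l → l ≤ M → 0 < b l := by
    intro l h1 h2
    rw [hb]
    apply Finset.prod_pos
    intro k hk
    simp only [Finset.mem_Icc] at hk
    by_cases hl : l < j
    · rw [if_pos hl, if_pos (by omega), hcast l h1 hl, hcast k hk.1 (by omega)]
      have : (k : ℚ) < (l : ℚ) := by exact_mod_cast (by omega : k < l)
      linarith
    · push_neg at hl
      rw [if_neg (by omega)]
      by_cases hkj : k < j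
      · rw [if_pos hkj, hcast k hk.1 hkj]
        have hxl : l ≤ x l := hxi l hl h2
        have : (k : ℚ) < (x l : ℚ) := by exact_mod_cast (by omega : k < x l)
        linarith
      · push_neg at hkj
        rw [if_neg (by omega)]
        have := hmono l h2 k hkj (by omega)
        have : (x k : ℚ) < (x l : ℚ) := by exact_mod_cast this
        linarith
  have hBpos : (0 : ℚ) < ∏ l ∈ Finset.Icc 1 M, b l := by
    apply Finset.prod_pos
    intro l hl
    simp only [Finset.mem_Icc] at hl
    exact hbpos l hl.1 hl.2
  have hDpos : (0 : ℚ) < ∏ k ∈ Finset.Icc j M, ((x k : ℚ) - c) := by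
    apply Finset.prod_pos
    intro k hk
    simp only [Finset.mem_Icc] at hk
    have h1 : (k : ℚ) ≤ (x k : ℚ) := by exact_mod_cast hxi k hk.1 hk.2
    have h2 : (j : ℚ) ≤ (k : ℚ) := by exact_mod_cast hk.1
    linarith
  have hAD : (∏ l ∈ Finset.Icc 1 M, a l) * (∏ k ∈ Finset.Icc j M, ((x k : ℚ) - c))
      = (∏ k ∈ Finset.Icc j M, (x k : ℚ)) * ∏ l ∈ Finset.Icc 1 M, b l := by
    rw [hsplit M (by omega) a, hsplit M (by omega) b]
    have e1 : (∏ l ∈ Finset.Icc 1 (j - 1), a l) = ∏ l ∈ Finset.Icc 1 (j - 1), b l := by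
      apply Finset.prod_congr rfl
      intro l hl
      simp only [Finset.mem_Icc] at hl
      exact hlt l (by omega)
    have e2 : (∏ l ∈ Finset.Icc j M, (((x l : ℚ) - c) * a l))
        = ∏ l ∈ Finset.Icc j M, ((x l : ℚ) * b l) := by
      apply Finset.prod_congr rfl
      intro l hl
      simp only [Finset.mem_Icc] at hl
      exact hge l hl.1 hl.2
    calc (∏ l ∈ Finset.Icc 1 (j - 1), a l) * (∏ l ∈ Finset.Icc j M, a l) *
          ∏ k ∈ Finset.Icc j M, ((x k : ℚ) - c)
        = (∏ l ∈ Finset.Icc 1 (j - 1), a l) *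
            ∏ l ∈ Finset.Icc j M, (((x l : ℚ) - c) * a l) := by
          rw [Finset.prod_mul_distrib]; ring
      _ = (∏ l ∈ Finset.Icc 1 (j - 1), b l) *
            ∏ l ∈ Finset.Icc j M, ((x l : ℚ) * b l) := by rw [e1, e2]
      _ = (∏ k ∈ Finset.Icc j M, (x k : ℚ)) *
            ((∏ l ∈ Finset.Icc 1 (j - 1), b l) * ∏ l ∈ Finset.Icc j M, b l) := by
          rw [Finset.prod_mul_distrib]; ring
  have part1 : (∏ l ∈ Finset.Icc 1 M, a l) / (∏ l ∈ Finset.Icc 1 M, b l)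
      = ∏ k ∈ Finset.Icc j M, (x k : ℚ) / ((x k : ℚ) - c) := by
    rw [Finset.prod_div_distrib, div_eq_div_iff (ne_of_gt hBpos) (ne_of_gt hDpos)]
    exact hAD
  exact ⟨part1, part2, part3⟩
end
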